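/- arXiv:1007.2372 — 5 statements merged into one kernel-verified Lean document; each statement's English description precedes it below -/
import Mathlib

section
/- Let A and B be associative unital k-algebras and let R : B ⊗ A → A ⊗ B and Q : A ⊗ B → A ⊗ B be linear maps satisfying the unit conditions R(b ⊗ 1) = 1 ⊗ b, R(1 ⊗ a) = a ⊗ 1, Q(a ⊗ 1) = a ⊗ 1, Q(1 ⊗ b) = 1 ⊗ b, the multiplicativity conditions (aa')_R ⊗ b_R = a_R a'_r ⊗ b_{R_r}, a_R ⊗ (bb')_R = a_{R_r} ⊗ b_r b'_R, (aa')_Q ⊗ b_Q = a_q a'_Q ⊗ b_{Q_q}, a_Q ⊗ (bb')_Q = a_{Q_q} ⊗ b_Q b'_q, and the compatibility conditions b_R ⊗ a_{R_Q} ⊗ b'_Q = b_R ⊗ a_{Q_R} ⊗ b'_Q and a_R ⊗ b_{R_Q} ⊗ a'_Q = a_R ⊗ b_{Q_R} ⊗ a'_Q. Then the multiplication on A ⊗ B defined by (a ⊗ b)(a' ⊗ b') = a_Q a'_R ⊗ b_R b'_Q is associative with unit 1 ⊗ 1. -/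
open TensorProduct

noncomputable section

namespace LR

variable {k : Type*} [Field k]

section Toolbox

variable {X Y Z W X' Y' : Type*}
  [AddCommMonoid X] [Module k X] [AddCommMonoid Y] [Module k Y]
  [AddCommMonoid Z] [Module k Z] [AddCommMonoid W] [Module k W]
  [AddCommMonoid X'] [Module k X'] [AddCommMonoid Y'] [Module k Y']

/-- Expand the first tensor factor using `f : X →ₗ X' ⊗ Y'`. -/
def expand (f : X →ₗ[k] X' ⊗[k] Y') : X ⊗[k] Z →ₗ[k] X' ⊗[k] (Y' ⊗[k] Z) :=
  (TensorProduct.assoc k X' Y' Z).toLinearMap ∘ₗ (TensorProduct.map f LinearMap.id)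

/-- Apply `f` to the first two factors of a right-nested triple tensor. -/
def app2 (f : X ⊗[k] Y →ₗ[k] X' ⊗[k] Y') :
    X ⊗[k] (Y ⊗[k] Z) →ₗ[k] X' ⊗[k] (Y' ⊗[k] Z) :=
  (TensorProduct.assoc k X' Y' Z).toLinearMap ∘ₗ (TensorProduct.map f LinearMap.id)
    ∘ₗ (TensorProduct.assoc k X Y Z).symm.toLinearMap

/-- Contract the first two factors of a right-nested triple tensor with `m`. -/
def con2 (m : X ⊗[k] Y →ₗ[k] W) : X ⊗[k] (Y ⊗[k] Z) →ₗ[k] W ⊗[k] Z :=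
  (TensorProduct.map m LinearMap.id) ∘ₗ (TensorProduct.assoc k X Y Z).symm.toLinearMap

/-- Swap the first two factors of a right-nested triple tensor. -/
def swL : X ⊗[k] (Y ⊗[k] Z) →ₗ[k] Y ⊗[k] (X ⊗[k] Z) :=
  (TensorProduct.assoc k Y X Z).toLinearMap
    ∘ₗ (TensorProduct.map (TensorProduct.comm k X Y).toLinearMap LinearMap.id)
    ∘ₗ (TensorProduct.assoc k X Y Z).symm.toLinearMap

/-- Exchange the second and third factors of `(X ⊗ Y) ⊗ Z`. -/
def ex23 : (X ⊗[k] Y) ⊗[k] Z →ₗ[k] (X ⊗[k] Z) ⊗[k] Y :=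
  (TensorProduct.assoc k X Z Y).symm.toLinearMap
    ∘ₗ (TensorProduct.map LinearMap.id (TensorProduct.comm k Y Z).toLinearMap)
    ∘ₗ (TensorProduct.assoc k X Y Z).toLinearMap

/-- The componentwise multiplication on a tensor product of two
(not necessarily unital) multiplications. -/
def tensMul (m₁ : X ⊗[k] X →ₗ[k] X) (m₂ : Y ⊗[k] Y →ₗ[k] Y) :
    (X ⊗[k] Y) ⊗[k] (X ⊗[k] Y) →ₗ[k] X ⊗[k] Y :=
  (TensorProduct.map m₁ m₂) ∘ₗ (tensorTensorTensorComm k X Y X Y).toLinearMap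

end Toolbox

section LRPair

variable {A B : Type*} [AddCommMonoid A] [Module k A] [AddCommMonoid B] [Module k B]

/-- `x ⊗ y ↦ Σ x·a'_S ⊗ y_S` where `S(y ⊗ a') = a'_S ⊗ y_S`. -/
def rext (mA : A ⊗[k] A →ₗ[k] A) (S : B ⊗[k] A →ₗ[k] A ⊗[k] B) (a' : A) :
    A ⊗[k] B →ₗ[k] A ⊗[k] B :=
  (TensorProduct.map mA LinearMap.id)
    ∘ₗ (TensorProduct.assoc k A A B).symm.toLinearMap
    ∘ₗ (TensorProduct.map LinearMap.id (S ∘ₗ (TensorProduct.mk k B A).flip a'))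

/-- `x ⊗ y ↦ Σ x_S ⊗ b_S · y` where `S(b ⊗ x) = x_S ⊗ b_S`. -/
def lext (mB : B ⊗[k] B →ₗ[k] B) (S : B ⊗[k] A →ₗ[k] A ⊗[k] B) (b : B) :
    A ⊗[k] B →ₗ[k] A ⊗[k] B :=
  (TensorProduct.map LinearMap.id mB)
    ∘ₗ (TensorProduct.assoc k A B B).toLinearMap
    ∘ₗ (TensorProduct.map (S ∘ₗ (TensorProduct.mk k B A) b) LinearMap.id)

/-- `x ⊗ y ↦ Σ a_S · x ⊗ y_S` where `S(a ⊗ y) = a_S ⊗ y_S`. -/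
def qlext (mA : A ⊗[k] A →ₗ[k] A) (S : A ⊗[k] B →ₗ[k] A ⊗[k] B) (a : A) :
    A ⊗[k] B →ₗ[k] A ⊗[k] B :=
  (TensorProduct.map (mA ∘ₗ (TensorProduct.comm k A A).toLinearMap) LinearMap.id)
    ∘ₗ (TensorProduct.assoc k A A B).symm.toLinearMap
    ∘ₗ (TensorProduct.map LinearMap.id (S ∘ₗ (TensorProduct.mk k A B) a))

/-- `x ⊗ y ↦ Σ x_S ⊗ y · b'_S` where `S(x ⊗ b') = x_S ⊗ b'_S`. -/
def qrext (mB : B ⊗[k] B →ₗ[k] B) (S : A ⊗[k] B →ₗ[k] A ⊗[k] B) (b' : B) :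
    A ⊗[k] B →ₗ[k] A ⊗[k] B :=
  (TensorProduct.map LinearMap.id (mB ∘ₗ (TensorProduct.comm k B B).toLinearMap))
    ∘ₗ (TensorProduct.assoc k A B B).toLinearMap
    ∘ₗ (TensorProduct.map (S ∘ₗ (TensorProduct.mk k A B).flip b') LinearMap.id)

/-- `x ⊗ y ↦ Σ y ⊗ S(x ⊗ b')`. -/
def swQ (S : A ⊗[k] B →ₗ[k] A ⊗[k] B) (b' : B) :
    A ⊗[k] B →ₗ[k] B ⊗[k] (A ⊗[k] B) :=
  (TensorProduct.map LinearMap.id S)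
    ∘ₗ (TensorProduct.map LinearMap.id ((TensorProduct.mk k A B).flip b'))
    ∘ₗ (TensorProduct.comm k A B).toLinearMap

/-- `x ⊗ y ↦ Σ v ⊗ (u ⊗ y)` where `S(b ⊗ x) = u ⊗ v`. -/
def swR (S : B ⊗[k] A →ₗ[k] A ⊗[k] B) (b : B) :
    A ⊗[k] B →ₗ[k] B ⊗[k] (A ⊗[k] B) :=
  (TensorProduct.assoc k B A B).toLinearMap
    ∘ₗ (TensorProduct.map (TensorProduct.comm k A B).toLinearMap LinearMap.id)
    ∘ₗ (TensorProduct.map (S ∘ₗ (TensorProduct.mk k B A) b) LinearMap.id)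

/-- `x ⊗ y ↦ Σ x ⊗ (v ⊗ u)` where `S(a' ⊗ y) = u ⊗ v`. -/
def swQ2 (S : A ⊗[k] B →ₗ[k] A ⊗[k] B) (a' : A) :
    A ⊗[k] B →ₗ[k] A ⊗[k] (B ⊗[k] A) :=
  TensorProduct.map LinearMap.id
    ((TensorProduct.comm k A B).toLinearMap ∘ₗ S ∘ₗ (TensorProduct.mk k A B) a')

/-- `x ⊗ y ↦ Σ u ⊗ (v ⊗ x)` where `S(y ⊗ a) = u ⊗ v`. -/
def swR2 (S : B ⊗[k] A →ₗ[k] A ⊗[k] B) (a : A) :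
    A ⊗[k] B →ₗ[k] A ⊗[k] (B ⊗[k] A) :=
  (TensorProduct.assoc k A B A).toLinearMap
    ∘ₗ (TensorProduct.map (S ∘ₗ (TensorProduct.mk k B A).flip a) LinearMap.id)
    ∘ₗ (TensorProduct.comm k A B).toLinearMap

/-- `(a ⊗ b) ⊗ (a' ⊗ b') ↦ (a ⊗ b') ⊗ (b ⊗ a')`. -/
def lrRearr : (A ⊗[k] B) ⊗[k] (A ⊗[k] B) →ₗ[k] (A ⊗[k] B) ⊗[k] (B ⊗[k] A) :=
  (tensorTensorTensorComm k A B B A).toLinearMap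
    ∘ₗ (TensorProduct.map LinearMap.id (TensorProduct.comm k A B).toLinearMap)

/-- The multiplication of the L-R-twisted tensor product:
`(a ⊗ b)(a' ⊗ b') = a_Q a'_R ⊗ b_R b'_Q`. -/
def lrMulGen (mA : A ⊗[k] A →ₗ[k] A) (mB : B ⊗[k] B →ₗ[k] B)
    (Q : A ⊗[k] B →ₗ[k] A ⊗[k] B) (R : B ⊗[k] A →ₗ[k] A ⊗[k] B) :
    (A ⊗[k] B) ⊗[k] (A ⊗[k] B) →ₗ[k] A ⊗[k] B :=
  (TensorProduct.map mA (mB ∘ₗ (TensorProduct.comm k B B).toLinearMap))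
    ∘ₗ (tensorTensorTensorComm k A B A B).toLinearMap
    ∘ₗ (TensorProduct.map Q R) ∘ₗ lrRearr

/-- `R : B ⊗ A → A ⊗ B` is a twisting map (w.r.t. the given multiplications
and units). -/
def IsTwistingMap (mA : A ⊗[k] A →ₗ[k] A) (mB : B ⊗[k] B →ₗ[k] B)
    (oneA : A) (oneB : B) (R : B ⊗[k] A →ₗ[k] A ⊗[k] B) : Prop :=
  (∀ a : A, R (oneB ⊗ₜ a) = a ⊗ₜ oneB) ∧
  (∀ b : B, R (b ⊗ₜ oneA) = oneA ⊗ₜ b) ∧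
  (∀ (a a' : A) (b : B), R (b ⊗ₜ mA (a ⊗ₜ a')) = rext mA R a' (R (b ⊗ₜ a))) ∧
  (∀ (a : A) (b b' : B), R (mB (b ⊗ₜ b') ⊗ₜ a) = lext mB R b (R (b' ⊗ₜ a)))

/-- The axioms of an L-R-twisted tensor product `A _Q⊗_R B`. -/
def IsLRPair (mA : A ⊗[k] A →ₗ[k] A) (mB : B ⊗[k] B →ₗ[k] B)
    (oneA : A) (oneB : B)
    (Q : A ⊗[k] B →ₗ[k] A ⊗[k] B) (R : B ⊗[k] A →ₗ[k] A ⊗[k] B) : Prop :=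
  IsTwistingMap mA mB oneA oneB R ∧
  (∀ a : A, Q (a ⊗ₜ oneB) = a ⊗ₜ oneB) ∧
  (∀ b : B, Q (oneA ⊗ₜ b) = oneA ⊗ₜ b) ∧
  (∀ (a a' : A) (b : B), Q (mA (a ⊗ₜ a') ⊗ₜ b) = qlext mA Q a (Q (a' ⊗ₜ b))) ∧
  (∀ (a : A) (b b' : B), Q (a ⊗ₜ mB (b ⊗ₜ b')) = qrext mB Q b' (Q (a ⊗ₜ b))) ∧
  (∀ (a : A) (b b' : B), swQ Q b' (R (b ⊗ₜ a)) = swR R b (Q (a ⊗ₜ b'))) ∧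
  (∀ (a a' : A) (b : B), swQ2 Q a' (R (b ⊗ₜ a)) = swR2 R a (Q (a' ⊗ₜ b)))

end LRPair

end LR

namespace LR

section Aux

variable {k : Type*} [Field k] {A B : Type*}
  [Ring A] [Algebra k A] [Ring B] [Algebra k B]

/-- The final multiplication step: `(u ⊗ v) ⊗ (u' ⊗ v') ↦ (u u') ⊗ (v' v)`. -/
def GG : (A ⊗[k] B) ⊗[k] (A ⊗[k] B) →ₗ[k] A ⊗[k] B :=
  (TensorProduct.map (LinearMap.mul' k A)
      ((LinearMap.mul' k B) ∘ₗ (TensorProduct.comm k B B).toLinearMap))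
    ∘ₗ (tensorTensorTensorComm k A B A B).toLinearMap

lemma GG_tmul (u u' : A) (v v' : B) :
    GG (k := k) ((u ⊗ₜ v) ⊗ₜ (u' ⊗ₜ v')) = (u * u') ⊗ₜ (v' * v) := by
  simp [GG, tensorTensorTensorComm_tmul]

lemma mu_tmul (Q : A ⊗[k] B →ₗ[k] A ⊗[k] B) (R : B ⊗[k] A →ₗ[k] A ⊗[k] B)
    (a a' : A) (b b' : B) :
    lrMulGen (LinearMap.mul' k A) (LinearMap.mul' k B) Q R
      ((a ⊗ₜ b) ⊗ₜ (a' ⊗ₜ b')) = GG (Q (a ⊗ₜ b') ⊗ₜ R (b ⊗ₜ a')) := by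
  simp [lrMulGen, lrRearr, GG, tensorTensorTensorComm_tmul]

variable (Q : A ⊗[k] B →ₗ[k] A ⊗[k] B) (R : B ⊗[k] A →ₗ[k] A ⊗[k] B)

/-- Bilinear package of `qlext`: `u ⊗ t ↦ qlext mA Q u t`. -/
def QLpack : A ⊗[k] (A ⊗[k] B) →ₗ[k] A ⊗[k] B :=
  con2 ((LinearMap.mul' k A) ∘ₗ (TensorProduct.comm k A A).toLinearMap)
    ∘ₗ (TensorProduct.map LinearMap.id Q) ∘ₗ swL

/-- Bilinear package of `lext`: `v' ⊗ t ↦ lext mB R v' t`. -/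
def Lpack : B ⊗[k] (A ⊗[k] B) →ₗ[k] A ⊗[k] B :=
  (TensorProduct.map LinearMap.id (LinearMap.mul' k B))
    ∘ₗ (TensorProduct.assoc k A B B).toLinearMap
    ∘ₗ (TensorProduct.map R LinearMap.id)
    ∘ₗ (TensorProduct.assoc k B A B).symm.toLinearMap

lemma QLpack_eq (u : A) (P : A ⊗[k] B) :
    QLpack Q (u ⊗ₜ P) = qlext (LinearMap.mul' k A) Q u P := by
  induction P using TensorProduct.induction_on with
  | zero => simp only [tmul_zero, map_zero]
  | tmul x y => simp [QLpack, qlext, con2, swL]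
  | add s t hs ht => simp only [tmul_add, map_add, hs, ht]

lemma Lpack_eq (v' : B) (t : A ⊗[k] B) :
    Lpack R (v' ⊗ₜ t) = lext (LinearMap.mul' k B) R v' t := by
  induction t using TensorProduct.induction_on with
  | zero => simp only [tmul_zero, map_zero]
  | tmul x y => simp [Lpack, lext]
  | add s t hs ht => simp only [tmul_add, map_add, hs, ht]

/-- Tail of the `qrext` package. -/
def tailB : (A ⊗[k] B) ⊗[k] B →ₗ[k] A ⊗[k] B :=
  (TensorProduct.map LinearMap.id
      ((LinearMap.mul' k B) ∘ₗ (TensorProduct.comm k B B).toLinearMap))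
    ∘ₗ (TensorProduct.assoc k A B B).toLinearMap
    ∘ₗ (TensorProduct.map Q LinearMap.id) ∘ₗ ex23

lemma tailB_eq (β : B) (P : A ⊗[k] B) :
    tailB Q (P ⊗ₜ β) = qrext (LinearMap.mul' k B) Q β P := by
  induction P using TensorProduct.induction_on with
  | zero => simp only [zero_tmul, map_zero]
  | tmul x y => simp [tailB, qrext, ex23]
  | add s t hs ht => simp only [add_tmul, map_add, hs, ht]

/-- Tail of the `rext` package. -/
def tailA : (A ⊗[k] B) ⊗[k] A →ₗ[k] A ⊗[k] B :=
  con2 (LinearMap.mul' k A) ∘ₗ (TensorProduct.map LinearMap.id R)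
    ∘ₗ (TensorProduct.assoc k A B A).toLinearMap

lemma tailA_eq (γ : A) (U : A ⊗[k] B) :
    tailA R (U ⊗ₜ γ) = rext (LinearMap.mul' k A) R γ U := by
  induction U using TensorProduct.induction_on with
  | zero => simp only [zero_tmul, map_zero]
  | tmul x y => simp [tailA, rext, con2]
  | add s t hs ht => simp only [add_tmul, map_add, hs, ht]

/-- `u ⊗ u' ↦ qlext mA Q u (Q (u' ⊗ b''))`. -/
def XiQ (b'' : B) : A ⊗[k] A →ₗ[k] A ⊗[k] B :=
  QLpack Q ∘ₗ (TensorProduct.map LinearMap.id (Q ∘ₗ (TensorProduct.mk k A B).flip b''))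

/-- `v ⊗ v' ↦ lext mB R v' (R (v ⊗ a''))`. -/
def XiR (a'' : A) : B ⊗[k] B →ₗ[k] A ⊗[k] B :=
  Lpack R ∘ₗ (TensorProduct.map LinearMap.id (R ∘ₗ (TensorProduct.mk k B A).flip a''))
    ∘ₗ (TensorProduct.comm k B B).toLinearMap

/-- Normal form of the left-hand side after one expansion. -/
def Xi (a'' : A) (b'' : B) : (A ⊗[k] B) ⊗[k] (A ⊗[k] B) →ₗ[k] A ⊗[k] B :=
  GG ∘ₗ (TensorProduct.map (XiQ Q b'') (XiR R a''))
    ∘ₗ (tensorTensorTensorComm k A B A B).toLinearMap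

/-- `δ ⊗ β ↦ qrext mB Q β (Q (a ⊗ δ))`. -/
def PhiB (a : A) : B ⊗[k] B →ₗ[k] A ⊗[k] B :=
  tailB Q ∘ₗ (TensorProduct.map (Q ∘ₗ (TensorProduct.mk k A B) a) LinearMap.id)

/-- `α ⊗ γ ↦ rext mA R γ (R (b ⊗ α))`. -/
def PhiA (b : B) : A ⊗[k] A →ₗ[k] A ⊗[k] B :=
  tailA R ∘ₗ (TensorProduct.map (R ∘ₗ (TensorProduct.mk k B A) b) LinearMap.id)

def rho : (A ⊗[k] B) ⊗[k] (A ⊗[k] B) →ₗ[k] (B ⊗[k] B) ⊗[k] (A ⊗[k] A) :=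
  (TensorProduct.map (TensorProduct.comm k B B).toLinearMap LinearMap.id)
    ∘ₗ (TensorProduct.comm k (A ⊗[k] A) (B ⊗[k] B)).toLinearMap
    ∘ₗ (tensorTensorTensorComm k A B A B).toLinearMap

/-- Normal form of the right-hand side after one expansion. -/
def Phi (a : A) (b : B) : (A ⊗[k] B) ⊗[k] (A ⊗[k] B) →ₗ[k] A ⊗[k] B :=
  GG ∘ₗ (TensorProduct.map (PhiB Q a) (PhiA R b)) ∘ₗ rho

def sigma' : (A ⊗[k] B) ⊗[k] (B ⊗[k] (A ⊗[k] B)) →ₗ[k]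
    (A ⊗[k] (A ⊗[k] B)) ⊗[k] (B ⊗[k] B) :=
  (tensorTensorTensorComm k A B (A ⊗[k] B) B).toLinearMap
    ∘ₗ (TensorProduct.map LinearMap.id (TensorProduct.comm k B (A ⊗[k] B)).toLinearMap)

def Theta1 (a'' : A) : (A ⊗[k] B) ⊗[k] (B ⊗[k] (A ⊗[k] B)) →ₗ[k] A ⊗[k] B :=
  GG ∘ₗ (TensorProduct.map (QLpack Q) (XiR R a'')) ∘ₗ sigma'

def Theta2 : (A ⊗[k] (B ⊗[k] A)) ⊗[k] (B ⊗[k] (A ⊗[k] B)) →ₗ[k] A ⊗[k] B :=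
  GG ∘ₗ (TensorProduct.map (QLpack Q) (Lpack R))
    ∘ₗ (TensorProduct.map LinearMap.id (TensorProduct.comm k (A ⊗[k] B) B).toLinearMap)
    ∘ₗ (TensorProduct.comm k ((A ⊗[k] B) ⊗[k] B) (A ⊗[k] (A ⊗[k] B))).toLinearMap
    ∘ₗ (tensorTensorTensorComm k (A ⊗[k] B) A B (A ⊗[k] B)).toLinearMap
    ∘ₗ (TensorProduct.map (TensorProduct.assoc k A B A).symm.toLinearMap LinearMap.id)

lemma L1
    (hQm1 : ∀ (u u' : A) (b : B),
      Q ((u * u') ⊗ₜ b) = qlext (LinearMap.mul' k A) Q u (Q (u' ⊗ₜ b)))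
    (hRm2 : ∀ (a : A) (v' v : B),
      R ((v' * v) ⊗ₜ a) = lext (LinearMap.mul' k B) R v' (R (v ⊗ₜ a)))
    (a'' : A) (b'' : B) (t : (A ⊗[k] B) ⊗[k] (A ⊗[k] B)) :
    lrMulGen (LinearMap.mul' k A) (LinearMap.mul' k B) Q R (GG t ⊗ₜ (a'' ⊗ₜ b''))
      = Xi Q R a'' b'' t := by
  induction t using TensorProduct.induction_on with
  | zero => simp only [map_zero, zero_tmul, tmul_zero]
  | add s t hs ht => simp only [map_add, add_tmul, tmul_add, hs, ht]
  | tmul x y =>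
    induction x using TensorProduct.induction_on with
    | zero => simp only [map_zero, zero_tmul, tmul_zero]
    | add s t hs ht => simp only [map_add, add_tmul, tmul_add, hs, ht]
    | tmul u v =>
      induction y using TensorProduct.induction_on with
      | zero => simp only [map_zero, zero_tmul, tmul_zero]
      | add s t hs ht => simp only [map_add, add_tmul, tmul_add, hs, ht]
      | tmul u' v' =>
        rw [GG_tmul, mu_tmul, hQm1, hRm2, ← QLpack_eq, ← Lpack_eq]
        simp [Xi, XiQ, XiR, tensorTensorTensorComm_tmul]

lemma R1
    (hQm2 : ∀ (a : A) (δ β : B),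
      Q (a ⊗ₜ (δ * β)) = qrext (LinearMap.mul' k B) Q β (Q (a ⊗ₜ δ)))
    (hRm1 : ∀ (b : B) (α γ : A),
      R (b ⊗ₜ (α * γ)) = rext (LinearMap.mul' k A) R γ (R (b ⊗ₜ α)))
    (a : A) (b : B) (t : (A ⊗[k] B) ⊗[k] (A ⊗[k] B)) :
    lrMulGen (LinearMap.mul' k A) (LinearMap.mul' k B) Q R ((a ⊗ₜ b) ⊗ₜ GG t)
      = Phi Q R a b t := by
  induction t using TensorProduct.induction_on with
  | zero => simp only [map_zero, zero_tmul, tmul_zero]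
  | add s t hs ht => simp only [map_add, add_tmul, tmul_add, hs, ht]
  | tmul x y =>
    induction x using TensorProduct.induction_on with
    | zero => simp only [map_zero, zero_tmul, tmul_zero]
    | add s t hs ht => simp only [map_add, add_tmul, tmul_add, hs, ht]
    | tmul α β =>
      induction y using TensorProduct.induction_on with
      | zero => simp only [map_zero, zero_tmul, tmul_zero]
      | add s t hs ht => simp only [map_add, add_tmul, tmul_add, hs, ht]
      | tmul γ δ =>
        rw [GG_tmul, mu_tmul, hQm2, hRm1, ← tailB_eq, ← tailA_eq]
        simp [Phi, PhiB, PhiA, rho, tensorTensorTensorComm_tmul]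

set_option synthInstance.maxHeartbeats 800000 in
lemma C1 (a'' : A) (b'' : B) (t s : A ⊗[k] B) :
    Xi Q R a'' b'' (t ⊗ₜ s) = Theta1 Q R a'' (t ⊗ₜ swQ Q b'' s) := by
  induction t using TensorProduct.induction_on with
  | zero => simp only [map_zero, zero_tmul, tmul_zero]
  | add x y hx hy => simp only [map_add, add_tmul, tmul_add, hx, hy]
  | tmul u v =>
    induction s using TensorProduct.induction_on with
    | zero => simp only [map_zero, zero_tmul, tmul_zero]
    | add x y hx hy => simp only [map_add, add_tmul, tmul_add, hx, hy]
    | tmul u' v' =>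
      simp [Xi, XiQ, XiR, Theta1, sigma', swQ, tensorTensorTensorComm_tmul]

set_option synthInstance.maxHeartbeats 800000 in
lemma C2 (a'' : A) (t : A ⊗[k] B) (w : B ⊗[k] (A ⊗[k] B)) :
    Theta1 Q R a'' (t ⊗ₜ w) = Theta2 Q R (swR2 R a'' t ⊗ₜ w) := by
  induction t using TensorProduct.induction_on with
  | zero => simp only [map_zero, zero_tmul, tmul_zero]
  | add x y hx hy => simp only [map_add, add_tmul, tmul_add, hx, hy]
  | tmul u v =>
    induction w using TensorProduct.induction_on with
    | zero => simp only [map_zero, zero_tmul, tmul_zero]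
    | add x y hx hy => simp only [map_add, add_tmul, tmul_add, hx, hy]
    | tmul c t₂ =>
      simp [Theta1, Theta2, sigma', swR2, XiR, tensorTensorTensorComm_tmul]

set_option synthInstance.maxHeartbeats 800000 in
set_option maxHeartbeats 1000000 in
lemma C3 (a : A) (b : B) (t s : A ⊗[k] B) :
    Theta2 Q R (swQ2 Q a s ⊗ₜ swR R b t) = Phi Q R a b (t ⊗ₜ s) := by
  induction t using TensorProduct.induction_on with
  | zero => simp only [map_zero, zero_tmul, tmul_zero]
  | add x y hx hy => simp only [map_add, add_tmul, tmul_add, hx, hy]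
  | tmul α β =>
    induction s using TensorProduct.induction_on with
    | zero => simp only [map_zero, zero_tmul, tmul_zero]
    | add x y hx hy => simp only [map_add, add_tmul, tmul_add, hx, hy]
    | tmul γ δ =>
      have key : ∀ (P U : A ⊗[k] B),
          Theta2 Q R ((γ ⊗ₜ (TensorProduct.comm k A B) P)
              ⊗ₜ ((TensorProduct.assoc k B A B) (((TensorProduct.comm k A B) U) ⊗ₜ β)))
            = GG (tailB Q (P ⊗ₜ β) ⊗ₜ tailA R (U ⊗ₜ γ)) := by
        intro P U
        induction P using TensorProduct.induction_on with
        | zero => simp only [map_zero, zero_tmul, tmul_zero]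
        | add x y hx hy => simp only [map_add, add_tmul, tmul_add, hx, hy]
        | tmul p w =>
          induction U using TensorProduct.induction_on with
          | zero => simp only [map_zero, zero_tmul, tmul_zero]
          | add x y hx hy => simp only [map_add, add_tmul, tmul_add, hx, hy]
          | tmul α' c =>
            simp only [Theta2, QLpack, Lpack, tailB, tailA, swL, con2, ex23,
              LinearMap.coe_comp, LinearEquiv.coe_coe, Function.comp_apply,
              map_tmul, assoc_tmul, assoc_symm_tmul, comm_tmul,
              tensorTensorTensorComm_tmul, LinearMap.id_coe, id_eq,
              mk_apply, LinearMap.flip_apply]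
            generalize Q (p ⊗ₜ β) = V
            generalize R (c ⊗ₜ γ) = W
            induction V using TensorProduct.induction_on with
            | zero => simp only [map_zero, zero_tmul, tmul_zero]
            | add x y hx hy => simp only [map_add, add_tmul, tmul_add, hx, hy]
            | tmul p' β' =>
              induction W using TensorProduct.induction_on with
              | zero => simp only [map_zero, zero_tmul, tmul_zero]
              | add x y hx hy => simp only [map_add, add_tmul, tmul_add, hx, hy]
              | tmul γ' c' =>
                simp only [map_tmul, assoc_tmul, assoc_symm_tmul, comm_tmul,
                  LinearMap.coe_comp, LinearEquiv.coe_coe, Function.comp_apply,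
                  LinearMap.id_coe, id_eq, LinearMap.mul'_apply, GG_tmul,
                  mul_assoc]
      simp only [swQ2, swR, Phi, PhiB, PhiA, rho, LinearMap.coe_comp,
        LinearEquiv.coe_coe, Function.comp_apply, map_tmul, comm_tmul,
        tensorTensorTensorComm_tmul, LinearMap.id_coe, id_eq, mk_apply,
        LinearMap.flip_apply]
      exact key (Q (a ⊗ₜ δ)) (R (b ⊗ₜ α))

end Aux

/-- If `R : B ⊗ A → A ⊗ B` and `Q : A ⊗ B → A ⊗ B` satisfy the
axioms of an L-R-twisted tensor product, then the multiplication
`(a ⊗ b)(a' ⊗ b') = a_Q a'_R ⊗ b_R b'_Q` on `A ⊗ B` is associative with unit `1 ⊗ 1`. -/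
theorem lr_twisted_tensor_product_is_algebra
    {k : Type*} [Field k] {A B : Type*}
    [Ring A] [Algebra k A] [Ring B] [Algebra k B]
    (Q : A ⊗[k] B →ₗ[k] A ⊗[k] B) (R : B ⊗[k] A →ₗ[k] A ⊗[k] B)
    (h : IsLRPair (LinearMap.mul' k A) (LinearMap.mul' k B) (1 : A) (1 : B) Q R) :
    (∀ x : A ⊗[k] B,
      lrMulGen (LinearMap.mul' k A) (LinearMap.mul' k B) Q R
        (((1 : A) ⊗ₜ[k] (1 : B)) ⊗ₜ[k] x) = x) ∧
    (∀ x : A ⊗[k] B,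
      lrMulGen (LinearMap.mul' k A) (LinearMap.mul' k B) Q R
        (x ⊗ₜ[k] ((1 : A) ⊗ₜ[k] (1 : B))) = x) ∧
    (∀ x y z : A ⊗[k] B,
      lrMulGen (LinearMap.mul' k A) (LinearMap.mul' k B) Q R
        ((lrMulGen (LinearMap.mul' k A) (LinearMap.mul' k B) Q R (x ⊗ₜ[k] y)) ⊗ₜ[k] z) =
      lrMulGen (LinearMap.mul' k A) (LinearMap.mul' k B) Q R
        (x ⊗ₜ[k] (lrMulGen (LinearMap.mul' k A) (LinearMap.mul' k B) Q R (y ⊗ₜ[k] z)))) := by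
  obtain ⟨⟨hR1, hR2, hRm1, hRm2⟩, hQ1, hQ2, hQm1, hQm2, hc1, hc2⟩ := h
  simp only [LinearMap.mul'_apply] at hRm1 hRm2 hQm1 hQm2
  refine ⟨?_, ?_, ?_⟩
  · intro x
    induction x using TensorProduct.induction_on with
    | zero => simp only [map_zero, tmul_zero]
    | add x y hx hy => simp only [map_add, tmul_add, hx, hy]
    | tmul a' b' =>
      rw [mu_tmul, hQ2, hR1, GG_tmul, one_mul, one_mul]
  · intro x
    induction x using TensorProduct.induction_on with
    | zero => simp only [map_zero, zero_tmul, tmul_zero]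
    | add x y hx hy => simp only [map_add, add_tmul, tmul_add, hx, hy]
    | tmul a b =>
      rw [mu_tmul, hQ1, hR2, GG_tmul, mul_one, mul_one]
  · intro x y z
    induction x using TensorProduct.induction_on with
    | zero => simp only [map_zero, zero_tmul, tmul_zero]
    | add x₁ x₂ h₁ h₂ => simp only [map_add, add_tmul, tmul_add, h₁, h₂]
    | tmul a b =>
      induction y using TensorProduct.induction_on with
      | zero => simp only [map_zero, zero_tmul, tmul_zero]
      | add y₁ y₂ h₁ h₂ => simp only [map_add, add_tmul, tmul_add, h₁, h₂]
      | tmul a' b' =>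
        induction z using TensorProduct.induction_on with
        | zero => simp only [map_zero, zero_tmul, tmul_zero]
        | add z₁ z₂ h₁ h₂ => simp only [map_add, add_tmul, tmul_add, h₁, h₂]
        | tmul a'' b'' =>
          rw [mu_tmul Q R a a' b b', mu_tmul Q R a' a'' b' b'',
            L1 Q R (fun u u' c => hQm1 u u' c) (fun c v' v => hRm2 c v' v) a'' b'',
            R1 Q R (fun c δ β => hQm2 c δ β) (fun c α γ => hRm1 α γ c) a b,
            C1, hc1, C2, ← hc2 a'' a b', C3]

end LR
end
end

section
/- Let H be a bialgebra, 𝒜 an H-bimodule algebra and 𝔸 an H-bicomodule algebra. Define R : 𝔸 ⊗ 𝒜 → 𝒜 ⊗ 𝔸 by R(u ⊗ φ) = u_{[-1]}·φ ⊗ u_{[0]} and Q : 𝒜 ⊗ 𝔸 → 𝒜 ⊗ 𝔸 by Q(φ ⊗ u) = φ·u_{<1>} ⊗ u_{<0>}. Then R and Q satisfy the axioms of an L-R-twisted tensor product, and the resulting algebra 𝒜 _Q⊗_R 𝔸 coincides with the L-R-smash product 𝒜 ♮ 𝔸 with multiplication (φ ♮ u)(φ' ♮ u') = (φ·u'_{<1>})(u_{[-1]}·φ')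 ♮ u_{[0]} u'_{<0>}. -/
open TensorProduct

noncomputable section

namespace LR

section Bialg

variable {k : Type*} [Field k]
variable {H : Type*} [Ring H] [Bialgebra k H]
variable {M : Type*} [AddCommMonoid M] [Module k M]

/-- `(M, mM, oneM)` together with the two actions `la`, `ra` is an `H`-bimodule
algebra. -/
def IsBimoduleAlgebra (mM : M ⊗[k] M →ₗ[k] M) (oneM : M)
    (la : H ⊗[k] M →ₗ[k] M) (ra : M ⊗[k] H →ₗ[k] M) : Prop :=
  (∀ m : M, la ((1 : H) ⊗ₜ m) = m) ∧
  (∀ (g h : H) (m : M), la ((g * h) ⊗ₜ m) = la (g ⊗ₜ la (h ⊗ₜ m))) ∧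
  (∀ m : M, ra (m ⊗ₜ (1 : H)) = m) ∧
  (∀ (m : M) (g h : H), ra (m ⊗ₜ (g * h)) = ra (ra (m ⊗ₜ g) ⊗ₜ h)) ∧
  (∀ (h : H) (m : M) (g : H), ra (la (h ⊗ₜ m) ⊗ₜ g) = la (h ⊗ₜ ra (m ⊗ₜ g))) ∧
  (∀ (h : H) (x y : M),
    la (h ⊗ₜ mM (x ⊗ₜ y)) =
      (mM ∘ₗ TensorProduct.map (la ∘ₗ (TensorProduct.mk k H M).flip x)
        (la ∘ₗ (TensorProduct.mk k H M).flip y)) (Coalgebra.comul (R := k) h)) ∧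
  (∀ h : H, la (h ⊗ₜ oneM) = Coalgebra.counit (R := k) h • oneM) ∧
  (∀ (h : H) (x y : M),
    ra (mM (x ⊗ₜ y) ⊗ₜ h) =
      (mM ∘ₗ TensorProduct.map (ra ∘ₗ (TensorProduct.mk k M H) x)
        (ra ∘ₗ (TensorProduct.mk k M H) y)) (Coalgebra.comul (R := k) h)) ∧
  (∀ h : H, ra (oneM ⊗ₜ h) = Coalgebra.counit (R := k) h • oneM)

/-- `(M, mM, oneM)` together with the two coactions `ρl`, `ρr` is an `H`-bicomodule
algebra. -/
def IsBicomoduleAlgebra (mM : M ⊗[k] M →ₗ[k] M) (oneM : M)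
    (ρl : M →ₗ[k] H ⊗[k] M) (ρr : M →ₗ[k] M ⊗[k] H) : Prop :=
  (∀ m : M, (TensorProduct.lid k M)
      ((TensorProduct.map (Coalgebra.counit (R := k)) LinearMap.id) (ρl m)) = m) ∧
  (∀ m : M, (TensorProduct.map (Coalgebra.comul (R := k)) LinearMap.id) (ρl m) =
      (TensorProduct.assoc k H H M).symm
        ((TensorProduct.map LinearMap.id ρl) (ρl m))) ∧
  (∀ m : M, (TensorProduct.rid k M)
      ((TensorProduct.map LinearMap.id (Coalgebra.counit (R := k))) (ρr m)) = m) ∧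
  (∀ m : M, (TensorProduct.map LinearMap.id (Coalgebra.comul (R := k))) (ρr m) =
      (TensorProduct.assoc k M H H)
        ((TensorProduct.map ρr LinearMap.id) (ρr m))) ∧
  (∀ m : M, (TensorProduct.map LinearMap.id ρr) (ρl m) =
      (TensorProduct.assoc k H M H)
        ((TensorProduct.map ρl LinearMap.id) (ρr m))) ∧
  (ρl oneM = (1 : H) ⊗ₜ oneM) ∧
  (∀ x y : M, ρl (mM (x ⊗ₜ y)) =
      tensMul (LinearMap.mul' k H) mM (ρl x ⊗ₜ ρl y)) ∧
  (ρr oneM = oneM ⊗ₜ (1 : H)) ∧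
  (∀ x y : M, ρr (mM (x ⊗ₜ y)) =
      tensMul mM (LinearMap.mul' k H) (ρr x ⊗ₜ ρr y))

variable {P : Type*} [AddCommMonoid P] [Module k P]

/-- `R(u ⊗ φ) = u_{[-1]}·φ ⊗ u_{[0]}` built from a left coaction on `P` and a left
action on `M`. -/
def smashR (la : H ⊗[k] M →ₗ[k] M) (ρl : P →ₗ[k] H ⊗[k] P) :
    P ⊗[k] M →ₗ[k] M ⊗[k] P :=
  (TensorProduct.map la LinearMap.id) ∘ₗ ex23 ∘ₗ (TensorProduct.map ρl LinearMap.id)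

/-- `Q(φ ⊗ u) = φ·u_{<1>} ⊗ u_{<0>}` built from a right coaction on `P` and a right
action on `M`. -/
def smashQ (ra : M ⊗[k] H →ₗ[k] M) (ρr : P →ₗ[k] P ⊗[k] H) :
    M ⊗[k] P →ₗ[k] M ⊗[k] P :=
  (TensorProduct.map ra LinearMap.id)
    ∘ₗ (TensorProduct.assoc k M H P).symm.toLinearMap
    ∘ₗ (TensorProduct.map LinearMap.id
        ((TensorProduct.comm k P H).toLinearMap ∘ₗ ρr))

/-- `R(h ⊗ m) = δ(h)₁ · m ⊗ δ(h)₂` (the smash-product twisting map associated to a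
comultiplication-like map `δ`). -/
def RsmashGen (la : H ⊗[k] M →ₗ[k] M) (δ : H →ₗ[k] H ⊗[k] H) :
    H ⊗[k] M →ₗ[k] M ⊗[k] H :=
  (TensorProduct.map la LinearMap.id) ∘ₗ ex23 ∘ₗ (TensorProduct.map δ LinearMap.id)

/-- `Q(m ⊗ h) = m · δ(h)₂ ⊗ δ(h)₁`. -/
def QsmashGen (ra : M ⊗[k] H →ₗ[k] M) (δ : H →ₗ[k] H ⊗[k] H) :
    M ⊗[k] H →ₗ[k] M ⊗[k] H :=
  (TensorProduct.map ra LinearMap.id)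
    ∘ₗ (TensorProduct.assoc k M H H).symm.toLinearMap
    ∘ₗ (TensorProduct.map LinearMap.id ((TensorProduct.comm k H H).toLinearMap ∘ₗ δ))

end Bialg

end LR

namespace LR

section Helpers

variable {k : Type*} [Field k]
variable {H : Type*} [Ring H] [Bialgebra k H]
variable {A B : Type*} [Ring A] [Algebra k A] [Ring B] [Algebra k B]

theorem smashR_tmul (la : H ⊗[k] A →ₗ[k] A) (ρl : B →ₗ[k] H ⊗[k] B) (u : B) (a : A) :
    smashR la ρl (u ⊗ₜ[k] a)
      = (TensorProduct.map (la ∘ₗ (TensorProduct.mk k H A).flip a) LinearMap.id) (ρl u) := by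
  have key : ∀ t : H ⊗[k] B, (TensorProduct.map la LinearMap.id) (ex23 (t ⊗ₜ[k] a))
      = (TensorProduct.map (la ∘ₗ (TensorProduct.mk k H A).flip a) LinearMap.id) t := by
    intro t
    induction t using TensorProduct.induction_on with
    | zero => simp
    | tmul h v => simp [ex23]
    | add x y hx hy => simp [add_tmul, hx, hy]
  simp [smashR, key]

set_option synthInstance.maxHeartbeats 400000 in
theorem smashQ_tmul (ra : A ⊗[k] H →ₗ[k] A) (ρr : B →ₗ[k] B ⊗[k] H) (φ : A) (u : B) :
    smashQ ra ρr (φ ⊗ₜ[k] u)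
      = (TensorProduct.map (ra ∘ₗ (TensorProduct.mk k A H) φ) LinearMap.id)
          ((TensorProduct.comm k B H) (ρr u)) := by
  have key : ∀ t : H ⊗[k] B, (TensorProduct.map ra LinearMap.id)
        ((TensorProduct.assoc k A H B).symm (φ ⊗ₜ[k] t))
      = (TensorProduct.map (ra ∘ₗ (TensorProduct.mk k A H) φ) LinearMap.id) t := by
    intro t
    induction t using TensorProduct.induction_on with
    | zero => simp only [tmul_zero, map_zero]
    | tmul h v => simp
    | add x y hx hy => simp [tmul_add, hx, hy]
  simp [smashQ, key]

end Helpers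

end LR

namespace LR

set_option maxHeartbeats 3200000 in
set_option synthInstance.maxHeartbeats 800000 in
/-- For a bialgebra `H`, an `H`-bimodule algebra `𝒜` and an
`H`-bicomodule algebra `𝔸`, the maps `R(u ⊗ φ) = u_{[-1]}·φ ⊗ u_{[0]}` and
`Q(φ ⊗ u) = φ·u_{<1>} ⊗ u_{<0>}` satisfy the L-R-twisted tensor product axioms, and
`𝒜 _Q⊗_R 𝔸` is the L-R-smash product `𝒜 ♮ 𝔸`:
`(φ ♮ u)(φ' ♮ u') = (φ·u'_{<1>})(u_{[-1]}·φ') ♮ u_{[0]}u'_{<0>}`. -/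
theorem lr_smash_product_is_lr_twisted_tensor_product
    {k : Type*} [Field k] {H 𝒜 𝔸 : Type*}
    [Ring H] [Bialgebra k H] [Ring 𝒜] [Algebra k 𝒜] [Ring 𝔸] [Algebra k 𝔸]
    (la : H ⊗[k] 𝒜 →ₗ[k] 𝒜) (ra : 𝒜 ⊗[k] H →ₗ[k] 𝒜)
    (hA : IsBimoduleAlgebra (LinearMap.mul' k 𝒜) (1 : 𝒜) la ra)
    (ρl : 𝔸 →ₗ[k] H ⊗[k] 𝔸) (ρr : 𝔸 →ₗ[k] 𝔸 ⊗[k] H)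
    (hB : IsBicomoduleAlgebra (LinearMap.mul' k 𝔸) (1 : 𝔸) ρl ρr) :
    IsLRPair (LinearMap.mul' k 𝒜) (LinearMap.mul' k 𝔸) (1 : 𝒜) (1 : 𝔸)
      (smashQ ra ρr) (smashR la ρl) ∧
    ∀ (φ φ' : 𝒜) (u u' : 𝔸),
      lrMulGen (LinearMap.mul' k 𝒜) (LinearMap.mul' k 𝔸)
          (smashQ ra ρr) (smashR la ρl) ((φ ⊗ₜ[k] u) ⊗ₜ[k] (φ' ⊗ₜ[k] u')) =
        (TensorProduct.map LinearMap.id (LinearMap.mul' k 𝔸))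
          (con2 (LinearMap.mul' k 𝒜)
            (swL ((TensorProduct.map LinearMap.id swL)
              ((TensorProduct.map LinearMap.id
                  (TensorProduct.map LinearMap.id (TensorProduct.comm k 𝔸 𝒜).toLinearMap))
                ((TensorProduct.map (la ∘ₗ (TensorProduct.mk k H 𝒜).flip φ')
                    (TensorProduct.map LinearMap.id
                      (TensorProduct.map LinearMap.id
                        (ra ∘ₗ (TensorProduct.mk k 𝒜 H) φ))))
                  ((TensorProduct.assoc k H 𝔸 (𝔸 ⊗[k] H))
                    ((ρl u) ⊗ₜ[k] (ρr u')))))))) := by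
  obtain ⟨hAul, hAal, hAur, hAar, hAc, hAml, hA1l, hAmr, hA1r⟩ := hA
  obtain ⟨hBcl, hBal, hBcr, hBar, hBc, hB1l, hBml, hB1r, hBmr⟩ := hB
  refine ⟨⟨⟨?_, ?_, ?_, ?_⟩, ?_, ?_, ?_, ?_, ?_, ?_⟩, ?_⟩
  -- R1
  · intro a
    rw [smashR_tmul, hB1l]
    simp [hAul]
  -- R2
  · intro b
    rw [smashR_tmul]
    have key : ∀ t : H ⊗[k] 𝔸,
        (TensorProduct.map (la ∘ₗ (TensorProduct.mk k H 𝒜).flip 1) LinearMap.id) t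
          = (1 : 𝒜) ⊗ₜ[k] (TensorProduct.lid k 𝔸)
              ((TensorProduct.map (Coalgebra.counit (R := k)) LinearMap.id) t) := by
      intro t
      induction t using TensorProduct.induction_on with
      | zero => simp
      | tmul h v => simp [hA1l, smul_tmul]
      | add x y hx hy => simp only [map_add, hx, hy, tmul_add]
    rw [key, hBcl b]
  -- R3
  · intro a a' b
    rw [LinearMap.mul'_apply, smashR_tmul, smashR_tmul]
    have measK : ∀ t : H ⊗[k] 𝔸,
        (TensorProduct.map (la ∘ₗ (TensorProduct.mk k H 𝒜).flip (a * a')) LinearMap.id) t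
          = (TensorProduct.map (LinearMap.mul' k 𝒜 ∘ₗ TensorProduct.map
                (la ∘ₗ (TensorProduct.mk k H 𝒜).flip a)
                (la ∘ₗ (TensorProduct.mk k H 𝒜).flip a')) LinearMap.id)
              ((TensorProduct.map (Coalgebra.comul (R := k)) LinearMap.id) t) := by
      intro t
      induction t using TensorProduct.induction_on with
      | zero => simp
      | tmul h v =>
        have hm := hAml h a a'
        rw [LinearMap.mul'_apply] at hm
        simp [hm]
      | add x y hx hy => simp only [map_add, hx, hy]
    rw [measK, hBal b]
    have final : ∀ t : H ⊗[k] 𝔸,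
        (TensorProduct.map (LinearMap.mul' k 𝒜 ∘ₗ TensorProduct.map
              (la ∘ₗ (TensorProduct.mk k H 𝒜).flip a)
              (la ∘ₗ (TensorProduct.mk k H 𝒜).flip a')) LinearMap.id)
            ((TensorProduct.assoc k H H 𝔸).symm
              ((TensorProduct.map LinearMap.id ρl) t))
          = rext (LinearMap.mul' k 𝒜) (smashR la ρl) a'
              ((TensorProduct.map (la ∘ₗ (TensorProduct.mk k H 𝒜).flip a) LinearMap.id) t) := by
      intro t
      induction t using TensorProduct.induction_on with
      | zero => simp [map_zero]
      | tmul h v =>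
        have key2 : rext (LinearMap.mul' k 𝒜) (smashR la ρl) a' ((la (h ⊗ₜ[k] a)) ⊗ₜ[k] v)
            = (TensorProduct.map (LinearMap.mul' k 𝒜) LinearMap.id)
                ((TensorProduct.assoc k 𝒜 𝒜 𝔸).symm
                  ((la (h ⊗ₜ[k] a)) ⊗ₜ[k]
                    ((TensorProduct.map (la ∘ₗ (TensorProduct.mk k H 𝒜).flip a')
                        LinearMap.id) (ρl v)))) := by
          simp [rext, smashR_tmul]
        simp only [TensorProduct.map_tmul, LinearMap.coe_comp, Function.comp_apply,
          TensorProduct.mk_apply, LinearMap.flip_apply, LinearMap.id_coe, id_eq]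
        rw [key2]
        generalize ρl v = r
        induction r using TensorProduct.induction_on with
        | zero => simp only [tmul_zero, map_zero]
        | tmul g w => simp
        | add x y hx hy => simp only [tmul_add, map_add, hx, hy]
      | add x y hx hy => simp only [map_add, hx, hy]
    exact final (ρl b)
  -- R4
  · intro a b b'
    rw [LinearMap.mul'_apply, smashR_tmul, smashR_tmul]
    have hbb : ρl (b * b')
        = tensMul (LinearMap.mul' k H) (LinearMap.mul' k 𝔸) (ρl b ⊗ₜ[k] ρl b') := by
      have := hBml b b'
      rwa [LinearMap.mul'_apply] at this
    rw [hbb]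
    have final : ∀ t' : H ⊗[k] 𝔸,
        (TensorProduct.map (la ∘ₗ (TensorProduct.mk k H 𝒜).flip a) LinearMap.id)
            (tensMul (LinearMap.mul' k H) (LinearMap.mul' k 𝔸) (ρl b ⊗ₜ[k] t'))
          = lext (LinearMap.mul' k 𝔸) (smashR la ρl) b
              ((TensorProduct.map (la ∘ₗ (TensorProduct.mk k H 𝒜).flip a) LinearMap.id) t') := by
      intro t'
      induction t' using TensorProduct.induction_on with
      | zero => simp only [tmul_zero, map_zero]
      | tmul h' v' =>
        have key2 : lext (LinearMap.mul' k 𝔸) (smashR la ρl) b ((la (h' ⊗ₜ[k] a)) ⊗ₜ[k] v')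
            = (TensorProduct.map LinearMap.id (LinearMap.mul' k 𝔸))
                ((TensorProduct.assoc k 𝒜 𝔸 𝔸)
                  (((TensorProduct.map (la ∘ₗ (TensorProduct.mk k H 𝒜).flip (la (h' ⊗ₜ[k] a)))
                      LinearMap.id) (ρl b)) ⊗ₜ[k] v')) := by
          simp [lext, smashR_tmul]
        simp only [TensorProduct.map_tmul, LinearMap.coe_comp, Function.comp_apply,
          TensorProduct.mk_apply, LinearMap.flip_apply, LinearMap.id_coe, id_eq]
        rw [key2]
        generalize ρl b = t
        induction t using TensorProduct.induction_on with
        | zero => simp only [map_zero, zero_tmul, tmul_zero]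
        | tmul h v => simp [tensMul, hAal]
        | add x y hx hy => simp only [tmul_add, add_tmul, map_add, hx, hy]
      | add x y hx hy => simp only [tmul_add, map_add, hx, hy]
    exact final (ρl b')
  -- Q1
  · intro a
    rw [smashQ_tmul, hB1r]
    simp [hAur]
  -- Q2
  · intro b
    rw [smashQ_tmul]
    have key : ∀ s : 𝔸 ⊗[k] H,
        (TensorProduct.map (ra ∘ₗ (TensorProduct.mk k 𝒜 H) 1) LinearMap.id)
            ((TensorProduct.comm k 𝔸 H) s)
          = (1 : 𝒜) ⊗ₜ[k] (TensorProduct.rid k 𝔸)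
              ((TensorProduct.map LinearMap.id (Coalgebra.counit (R := k))) s) := by
      intro s
      induction s using TensorProduct.induction_on with
      | zero => simp
      | tmul w h => simp [hA1r, smul_tmul]
      | add x y hx hy => simp only [map_add, hx, hy, tmul_add]
    rw [key, hBcr b]
  -- Q3
  · intro a a' b
    rw [LinearMap.mul'_apply, smashQ_tmul, smashQ_tmul]
    have measK : ∀ t : H ⊗[k] 𝔸,
        (TensorProduct.map (ra ∘ₗ (TensorProduct.mk k 𝒜 H) (a * a')) LinearMap.id) t
          = (TensorProduct.map (LinearMap.mul' k 𝒜 ∘ₗ TensorProduct.map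
                (ra ∘ₗ (TensorProduct.mk k 𝒜 H) a)
                (ra ∘ₗ (TensorProduct.mk k 𝒜 H) a')) LinearMap.id)
              ((TensorProduct.map (Coalgebra.comul (R := k)) LinearMap.id) t) := by
      intro t
      induction t using TensorProduct.induction_on with
      | zero => simp
      | tmul h w =>
        have hm := hAmr h a a'
        rw [LinearMap.mul'_apply] at hm
        simp [hm]
      | add x y hx hy => simp only [map_add, hx, hy]
    rw [measK]
    have swap : ∀ s : 𝔸 ⊗[k] H,
        (TensorProduct.map (Coalgebra.comul (R := k)) LinearMap.id)
            ((TensorProduct.comm k 𝔸 H) s)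
          = (TensorProduct.comm k 𝔸 (H ⊗[k] H))
              ((TensorProduct.map LinearMap.id (Coalgebra.comul (R := k))) s) := by
      intro s
      induction s using TensorProduct.induction_on with
      | zero => simp
      | tmul w h => simp
      | add x y hx hy => simp only [map_add, hx, hy]
    rw [swap, hBar b]
    have final : ∀ s : 𝔸 ⊗[k] H,
        (TensorProduct.map (LinearMap.mul' k 𝒜 ∘ₗ TensorProduct.map
              (ra ∘ₗ (TensorProduct.mk k 𝒜 H) a)
              (ra ∘ₗ (TensorProduct.mk k 𝒜 H) a')) LinearMap.id)
            ((TensorProduct.comm k 𝔸 (H ⊗[k] H))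
              ((TensorProduct.assoc k 𝔸 H H)
                ((TensorProduct.map ρr LinearMap.id) s)))
          = qlext (LinearMap.mul' k 𝒜) (smashQ ra ρr) a
              ((TensorProduct.map (ra ∘ₗ (TensorProduct.mk k 𝒜 H) a') LinearMap.id)
                ((TensorProduct.comm k 𝔸 H) s)) := by
      intro s
      induction s using TensorProduct.induction_on with
      | zero => simp [map_zero]
      | tmul w h =>
        have key2 : qlext (LinearMap.mul' k 𝒜) (smashQ ra ρr) a ((ra (a' ⊗ₜ[k] h)) ⊗ₜ[k] w)
            = (TensorProduct.map (LinearMap.mul' k 𝒜 ∘ₗ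
                  (TensorProduct.comm k 𝒜 𝒜).toLinearMap) LinearMap.id)
                ((TensorProduct.assoc k 𝒜 𝒜 𝔸).symm
                  ((ra (a' ⊗ₜ[k] h)) ⊗ₜ[k]
                    ((TensorProduct.map (ra ∘ₗ (TensorProduct.mk k 𝒜 H) a) LinearMap.id)
                      ((TensorProduct.comm k 𝔸 H) (ρr w))))) := by
          simp [qlext, smashQ_tmul]
        simp only [TensorProduct.map_tmul, LinearMap.coe_comp, Function.comp_apply,
          TensorProduct.mk_apply, LinearMap.flip_apply, LinearMap.id_coe, id_eq,
          TensorProduct.comm_tmul]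
        rw [key2]
        generalize ρr w = r
        induction r using TensorProduct.induction_on with
        | zero => simp only [map_zero, zero_tmul, tmul_zero]
        | tmul w' g => simp
        | add x y hx hy => simp only [map_add, add_tmul, tmul_add, hx, hy]
      | add x y hx hy => simp only [map_add, hx, hy]
    exact final (ρr b)
  -- Q4
  · intro a b b'
    rw [LinearMap.mul'_apply, smashQ_tmul, smashQ_tmul]
    have hbb : ρr (b * b')
        = tensMul (LinearMap.mul' k 𝔸) (LinearMap.mul' k H) (ρr b ⊗ₜ[k] ρr b') := by
      have := hBmr b b'
      rwa [LinearMap.mul'_apply] at this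
    rw [hbb]
    have final : ∀ s : 𝔸 ⊗[k] H,
        (TensorProduct.map (ra ∘ₗ (TensorProduct.mk k 𝒜 H) a) LinearMap.id)
            ((TensorProduct.comm k 𝔸 H)
              (tensMul (LinearMap.mul' k 𝔸) (LinearMap.mul' k H) (s ⊗ₜ[k] ρr b')))
          = qrext (LinearMap.mul' k 𝔸) (smashQ ra ρr) b'
              ((TensorProduct.map (ra ∘ₗ (TensorProduct.mk k 𝒜 H) a) LinearMap.id)
                ((TensorProduct.comm k 𝔸 H) s)) := by
      intro s
      induction s using TensorProduct.induction_on with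
      | zero => simp only [zero_tmul, map_zero]
      | tmul w h =>
        have key2 : qrext (LinearMap.mul' k 𝔸) (smashQ ra ρr) b' ((ra (a ⊗ₜ[k] h)) ⊗ₜ[k] w)
            = (TensorProduct.map LinearMap.id (LinearMap.mul' k 𝔸 ∘ₗ
                  (TensorProduct.comm k 𝔸 𝔸).toLinearMap))
                ((TensorProduct.assoc k 𝒜 𝔸 𝔸)
                  (((TensorProduct.map (ra ∘ₗ (TensorProduct.mk k 𝒜 H) (ra (a ⊗ₜ[k] h)))
                      LinearMap.id) ((TensorProduct.comm k 𝔸 H) (ρr b'))) ⊗ₜ[k] w)) := by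
          simp [qrext, smashQ_tmul]
        simp only [TensorProduct.map_tmul, LinearMap.coe_comp, Function.comp_apply,
          TensorProduct.mk_apply, LinearMap.flip_apply, LinearMap.id_coe, id_eq,
          TensorProduct.comm_tmul]
        rw [key2]
        generalize ρr b' = r
        induction r using TensorProduct.induction_on with
        | zero => simp only [map_zero, zero_tmul, tmul_zero]
        | tmul w' h' => simp [tensMul, hAar]
        | add x y hx hy => simp only [map_add, add_tmul, tmul_add, hx, hy]
      | add x y hx hy => simp only [add_tmul, map_add, hx, hy]
    exact final (ρr b)
  -- compat1
  · intro a b b'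
    rw [smashR_tmul, smashQ_tmul]
    have hswQ : ∀ x : 𝒜 ⊗[k] 𝔸,
        swQ (smashQ ra ρr) b' x
          = (TensorProduct.map LinearMap.id
              ((TensorProduct.map ra LinearMap.id)
                ∘ₗ (TensorProduct.assoc k 𝒜 H 𝔸).symm.toLinearMap
                ∘ₗ (TensorProduct.mk k 𝒜 (H ⊗[k] 𝔸)).flip
                    ((TensorProduct.comm k 𝔸 H) (ρr b'))))
              ((TensorProduct.comm k 𝒜 𝔸) x) := by
      intro x
      induction x using TensorProduct.induction_on with
      | zero => simp
      | tmul c u => simp [swQ, smashQ]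
      | add x y hx hy => simp only [map_add, hx, hy]
    have hswR : ∀ y : 𝒜 ⊗[k] 𝔸,
        swR (smashR la ρl) b y
          = (TensorProduct.assoc k 𝔸 𝒜 𝔸)
              ((TensorProduct.map (TensorProduct.comm k 𝒜 𝔸).toLinearMap LinearMap.id)
                ((TensorProduct.map ((TensorProduct.map la LinearMap.id) ∘ₗ ex23 ∘ₗ
                    (TensorProduct.mk k (H ⊗[k] 𝔸) 𝒜) (ρl b)) LinearMap.id) y)) := by
      intro y
      induction y using TensorProduct.induction_on with
      | zero => simp
      | tmul c u => simp [swR, smashR]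
      | add x y hx hy => simp only [map_add, hx, hy]
    rw [hswQ, hswR]
    generalize (TensorProduct.comm k 𝔸 H) (ρr b') = s
    generalize ρl b = t
    induction t using TensorProduct.induction_on with
    | zero =>
      simp only [map_zero, LinearMap.map_zero, LinearMap.zero_comp, LinearMap.comp_zero,
        TensorProduct.map_zero_left, LinearMap.zero_apply]
    | tmul h v =>
      induction s using TensorProduct.induction_on with
      | zero =>
        simp only [map_zero, LinearMap.map_zero, LinearMap.flip_apply,
          TensorProduct.mk_apply, tmul_zero]
        simp
      | tmul g w => simp [ex23, hAc]
      | add x y hx hy =>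
        simp only [map_add, LinearMap.map_add, LinearMap.flip_apply, TensorProduct.mk_apply,
          tmul_add, TensorProduct.map_tmul, LinearMap.id_coe, id_eq,
          TensorProduct.comm_tmul] at hx hy ⊢
        rw [← hx, ← hy]
        simp [tmul_add]
    | add x y hx hy =>
      simp only [map_add, LinearMap.map_add, LinearMap.add_comp, LinearMap.comp_add,
        TensorProduct.map_add_left, LinearMap.add_apply, hx, hy]
  -- compat2
  · intro a a' b
    rw [smashR_tmul, smashQ_tmul]
    have haveL : ∀ t : H ⊗[k] 𝔸,
        swQ2 (smashQ ra ρr) a'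
            ((TensorProduct.map (la ∘ₗ (TensorProduct.mk k H 𝒜).flip a) LinearMap.id) t)
          = (TensorProduct.map (la ∘ₗ (TensorProduct.mk k H 𝒜).flip a)
              ((TensorProduct.comm k 𝒜 𝔸).toLinearMap
                ∘ₗ (TensorProduct.map (ra ∘ₗ (TensorProduct.mk k 𝒜 H) a') LinearMap.id)
                ∘ₗ (TensorProduct.comm k 𝔸 H).toLinearMap ∘ₗ ρr)) t := by
      intro t
      induction t using TensorProduct.induction_on with
      | zero => simp
      | tmul h v => simp [swQ2, smashQ_tmul]
      | add x y hx hy => simp only [map_add, hx, hy]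
    rw [haveL]
    have split : ∀ t : H ⊗[k] 𝔸,
        (TensorProduct.map (la ∘ₗ (TensorProduct.mk k H 𝒜).flip a)
            ((TensorProduct.comm k 𝒜 𝔸).toLinearMap
              ∘ₗ (TensorProduct.map (ra ∘ₗ (TensorProduct.mk k 𝒜 H) a') LinearMap.id)
              ∘ₗ (TensorProduct.comm k 𝔸 H).toLinearMap ∘ₗ ρr)) t
          = (TensorProduct.map (la ∘ₗ (TensorProduct.mk k H 𝒜).flip a)
              ((TensorProduct.comm k 𝒜 𝔸).toLinearMap
                ∘ₗ (TensorProduct.map (ra ∘ₗ (TensorProduct.mk k 𝒜 H) a') LinearMap.id)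
                ∘ₗ (TensorProduct.comm k 𝔸 H).toLinearMap))
              ((TensorProduct.map LinearMap.id ρr) t) := by
      intro t
      induction t using TensorProduct.induction_on with
      | zero => simp
      | tmul h v => simp
      | add x y hx hy => simp only [map_add, hx, hy]
    rw [split, hBc b]
    have haveR : ∀ s : 𝔸 ⊗[k] H,
        swR2 (smashR la ρl) a
            ((TensorProduct.map (ra ∘ₗ (TensorProduct.mk k 𝒜 H) a') LinearMap.id)
              ((TensorProduct.comm k 𝔸 H) s))
          = (TensorProduct.assoc k 𝒜 𝔸 𝒜)
              ((TensorProduct.map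
                  (TensorProduct.map (la ∘ₗ (TensorProduct.mk k H 𝒜).flip a) LinearMap.id)
                  (ra ∘ₗ (TensorProduct.mk k 𝒜 H) a'))
                ((TensorProduct.map ρl LinearMap.id) s)) := by
      intro s
      induction s using TensorProduct.induction_on with
      | zero => simp
      | tmul w g => simp [swR2, smashR_tmul]
      | add x y hx hy => simp only [map_add, hx, hy]
    rw [haveR]
    generalize (TensorProduct.map ρl LinearMap.id) (ρr b) = z
    induction z using TensorProduct.induction_on with
    | zero => simp
    | tmul x g =>
      induction x using TensorProduct.induction_on with
      | zero => simp only [zero_tmul, map_zero]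
      | tmul h v => simp
      | add x y hx hy => simp only [add_tmul, map_add, hx, hy]
    | add x y hx hy => simp only [map_add, hx, hy]
  -- mult formula
  · intro φ φ' u u'
    have final : ∀ (t : H ⊗[k] 𝔸) (s : 𝔸 ⊗[k] H),
        (TensorProduct.map (LinearMap.mul' k 𝒜)
            (LinearMap.mul' k 𝔸 ∘ₗ (TensorProduct.comm k 𝔸 𝔸).toLinearMap))
          ((tensorTensorTensorComm k 𝒜 𝔸 𝒜 𝔸)
            (((TensorProduct.map (ra ∘ₗ (TensorProduct.mk k 𝒜 H) φ) LinearMap.id)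
                ((TensorProduct.comm k 𝔸 H) s)) ⊗ₜ[k]
              ((TensorProduct.map (la ∘ₗ (TensorProduct.mk k H 𝒜).flip φ') LinearMap.id) t)))
          = (TensorProduct.map LinearMap.id (LinearMap.mul' k 𝔸))
              (con2 (LinearMap.mul' k 𝒜)
                (swL ((TensorProduct.map LinearMap.id swL)
                  ((TensorProduct.map LinearMap.id
                      (TensorProduct.map LinearMap.id (TensorProduct.comm k 𝔸 𝒜).toLinearMap))
                    ((TensorProduct.map (la ∘ₗ (TensorProduct.mk k H 𝒜).flip φ')
                        (TensorProduct.map LinearMap.id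
                          (TensorProduct.map LinearMap.id
                            (ra ∘ₗ (TensorProduct.mk k 𝒜 H) φ))))
                      ((TensorProduct.assoc k H 𝔸 (𝔸 ⊗[k] H))
                        (t ⊗ₜ[k] s))))))) := by
      intro t s
      induction t using TensorProduct.induction_on with
      | zero => simp only [map_zero, tmul_zero, zero_tmul]
      | tmul h v =>
        induction s using TensorProduct.induction_on with
        | zero => simp only [map_zero, tmul_zero, zero_tmul]
        | tmul w g => simp [swL, con2]
        | add x y hx hy => simp only [map_add, tmul_add, add_tmul, hx, hy]
      | add x y hx hy => simp only [map_add, tmul_add, add_tmul, hx, hy]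
    have lhs1 : lrMulGen (LinearMap.mul' k 𝒜) (LinearMap.mul' k 𝔸)
          (smashQ ra ρr) (smashR la ρl) ((φ ⊗ₜ[k] u) ⊗ₜ[k] (φ' ⊗ₜ[k] u'))
        = (TensorProduct.map (LinearMap.mul' k 𝒜)
            (LinearMap.mul' k 𝔸 ∘ₗ (TensorProduct.comm k 𝔸 𝔸).toLinearMap))
          ((tensorTensorTensorComm k 𝒜 𝔸 𝒜 𝔸)
            ((smashQ ra ρr (φ ⊗ₜ[k] u')) ⊗ₜ[k] (smashR la ρl (u ⊗ₜ[k] φ')))) := by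
      simp [lrMulGen, lrRearr]
    rw [lhs1, smashQ_tmul, smashR_tmul]
    exact final (ρl u) (ρr u')

end LR
end
end

section
/- Let D be an algebra with multiplication μ and T : D ⊗ D → D ⊗ D a linear map satisfying T(1 ⊗ d) = 1 ⊗ d, T(d ⊗ 1) = d ⊗ 1, μ₂₃ ∘ T₁₃ ∘ T₁₂ = T ∘ μ₂₃, μ₁₂ ∘ T₁₃ ∘ T₂₃ = T ∘ μ₁₂, and T₁₂ ∘ T₂₃ = T₂₃ ∘ T₁₂ (as maps on D ⊗ D ⊗ D). Then μ ∘ T : D ⊗ D → D is another associative algebra structure on D with the same unit 1. -/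
open TensorProduct

noncomputable section

namespace LR

section Twistor

variable {k : Type*} [Field k]
variable {D : Type*} [AddCommGroup D] [Module k D]

/-- `T` acting on the factors 1 and 2 of `D ⊗ (D ⊗ D)`. -/
def T12 (T : D ⊗[k] D →ₗ[k] D ⊗[k] D) : D ⊗[k] (D ⊗[k] D) →ₗ[k] D ⊗[k] (D ⊗[k] D) :=
  (TensorProduct.assoc k D D D).toLinearMap ∘ₗ (TensorProduct.map T LinearMap.id)
    ∘ₗ (TensorProduct.assoc k D D D).symm.toLinearMap

/-- `T` acting on the factors 2 and 3 of `D ⊗ (D ⊗ D)`. -/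
def T23 (T : D ⊗[k] D →ₗ[k] D ⊗[k] D) : D ⊗[k] (D ⊗[k] D) →ₗ[k] D ⊗[k] (D ⊗[k] D) :=
  TensorProduct.map LinearMap.id T

/-- `T` acting on the factors 1 and 3 of `D ⊗ (D ⊗ D)`. -/
def T13 (T : D ⊗[k] D →ₗ[k] D ⊗[k] D) : D ⊗[k] (D ⊗[k] D) →ₗ[k] D ⊗[k] (D ⊗[k] D) :=
  (TensorProduct.map LinearMap.id (TensorProduct.comm k D D).toLinearMap) ∘ₗ T12 T
    ∘ₗ (TensorProduct.map LinearMap.id (TensorProduct.comm k D D).toLinearMap)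

/-- multiplication of the factors 2 and 3 of `D ⊗ (D ⊗ D)`. -/
def mu23 (mD : D ⊗[k] D →ₗ[k] D) : D ⊗[k] (D ⊗[k] D) →ₗ[k] D ⊗[k] D :=
  TensorProduct.map LinearMap.id mD

/-- multiplication of the factors 1 and 2 of `D ⊗ (D ⊗ D)`. -/
def mu12 (mD : D ⊗[k] D →ₗ[k] D) : D ⊗[k] (D ⊗[k] D) →ₗ[k] D ⊗[k] D :=
  (TensorProduct.map mD LinearMap.id) ∘ₗ (TensorProduct.assoc k D D D).symm.toLinearMap

/-- `T` is a twistor for the algebra `(D, mD, oneD)`. -/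
def IsTwistor (mD : D ⊗[k] D →ₗ[k] D) (oneD : D)
    (T : D ⊗[k] D →ₗ[k] D ⊗[k] D) : Prop :=
  (∀ d : D, T (oneD ⊗ₜ d) = oneD ⊗ₜ d) ∧
  (∀ d : D, T (d ⊗ₜ oneD) = d ⊗ₜ oneD) ∧
  (mu23 mD ∘ₗ T13 T ∘ₗ T12 T = T ∘ₗ mu23 mD) ∧
  (mu12 mD ∘ₗ T13 T ∘ₗ T23 T = T ∘ₗ mu12 mD) ∧
  (T12 T ∘ₗ T23 T = T23 T ∘ₗ T12 T)

end Twistor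

section Swap24

variable {k : Type*} [Field k]
variable {A B : Type*} [AddCommGroup A] [Module k A] [AddCommGroup B] [Module k B]

/-- `(x ⊗ y) ⊗ (u ⊗ v) ↦ (x ⊗ v) ⊗ (u ⊗ y)`. -/
def swap24 : (A ⊗[k] B) ⊗[k] (A ⊗[k] B) →ₗ[k] (A ⊗[k] B) ⊗[k] (A ⊗[k] B) :=
  (tensorTensorTensorComm k A A B B).toLinearMap
    ∘ₗ (TensorProduct.map LinearMap.id (TensorProduct.comm k B B).toLinearMap)
    ∘ₗ (tensorTensorTensorComm k A B A B).toLinearMap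

end Swap24

end LR

namespace LR

set_option maxHeartbeats 1000000 in
set_option synthInstance.maxHeartbeats 400000 in
/-- If `T` is a twistor for the algebra `D`, then `μ ∘ T` is another
associative algebra structure on `D` with the same unit `1`. -/
theorem twistor_gives_algebra
    {k : Type*} [Field k] {D : Type*} [Ring D] [Algebra k D]
    (T : D ⊗[k] D →ₗ[k] D ⊗[k] D)
    (hT : IsTwistor (LinearMap.mul' k D) (1 : D) T) :
    (∀ d : D, (LinearMap.mul' k D ∘ₗ T) ((1 : D) ⊗ₜ d) = d) ∧
    (∀ d : D, (LinearMap.mul' k D ∘ₗ T) (d ⊗ₜ (1 : D)) = d) ∧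
    (∀ x y z : D,
      (LinearMap.mul' k D ∘ₗ T) (((LinearMap.mul' k D ∘ₗ T) (x ⊗ₜ y)) ⊗ₜ z) =
      (LinearMap.mul' k D ∘ₗ T) (x ⊗ₜ ((LinearMap.mul' k D ∘ₗ T) (y ⊗ₜ z)))) := by
  obtain ⟨h1, h2, h3, h4, h5⟩ := hT
  set m := LinearMap.mul' k D with hm
  refine ⟨?_, ?_, ?_⟩
  · intro d
    simp [hm, h1 d]
  · intro d
    simp [hm, h2 d]
  · intro x y z
    have keyL : ∀ u : D ⊗[k] D,
        m (T (m u ⊗ₜ z)) =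
          (m ∘ₗ T ∘ₗ mu12 m) ((TensorProduct.assoc k D D D) (u ⊗ₜ z)) := by
      intro u
      induction u using TensorProduct.induction_on with
      | zero => simp [mu12]
      | tmul a b => simp [mu12]
      | add u v hu hv =>
          simp only [map_add, TensorProduct.add_tmul] at *
          simp [hu, hv]
    have keyR : ∀ u : D ⊗[k] D,
        m (T (x ⊗ₜ m u)) = (m ∘ₗ T ∘ₗ mu23 m) (x ⊗ₜ u) := by
      intro u
      induction u using TensorProduct.induction_on with
      | zero => simp [mu23]
      | tmul a b => simp [mu23]
      | add u v hu hv =>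
          simp only [map_add, TensorProduct.tmul_add] at *
          simp [hu, hv]
    have hmm : (m ∘ₗ mu12 m : D ⊗[k] (D ⊗[k] D) →ₗ[k] D) = m ∘ₗ mu23 m := by
      apply TensorProduct.ext
      apply LinearMap.ext; intro a
      apply TensorProduct.ext'
      intro b c
      simp [hm, mu12, mu23, mul_assoc]
    set w : D ⊗[k] (D ⊗[k] D) := x ⊗ₜ (y ⊗ₜ z) with hw
    have e1 : T12 T w = (TensorProduct.assoc k D D D) ((T (x ⊗ₜ y)) ⊗ₜ z) := by
      simp [T12, hw]
    have e2 : T23 T w = x ⊗ₜ T (y ⊗ₜ z) := by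
      simp [T23, hw]
    have h4' : ∀ v, T (mu12 m v) = mu12 m (T13 T (T23 T v)) := by
      intro v
      have := LinearMap.congr_fun h4 v
      simpa using this.symm
    have h3' : ∀ v, T (mu23 m v) = mu23 m (T13 T (T12 T v)) := by
      intro v
      have := LinearMap.congr_fun h3 v
      simpa using this.symm
    have hc : T23 T (T12 T w) = T12 T (T23 T w) := by
      simpa using (LinearMap.congr_fun h5 w).symm
    calc m (T (m (T (x ⊗ₜ y)) ⊗ₜ z))
        = (m ∘ₗ T ∘ₗ mu12 m) (T12 T w) := by rw [keyL (T (x ⊗ₜ y)), e1]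
      _ = m (T (mu12 m (T12 T w))) := rfl
      _ = m (mu12 m (T13 T (T23 T (T12 T w)))) := by rw [h4']
      _ = m (mu12 m (T13 T (T12 T (T23 T w)))) := by rw [hc]
      _ = m (mu23 m (T13 T (T12 T (T23 T w)))) :=
          LinearMap.congr_fun hmm _
      _ = m (T (mu23 m (T23 T w))) := by rw [h3']
      _ = (m ∘ₗ T ∘ₗ mu23 m) (T23 T w) := rfl
      _ = m (T (x ⊗ₜ m (T (y ⊗ₜ z)))) := by rw [e2, ← keyR (T (y ⊗ₜ z))]

end LR
end
end

section
/- Let A _Q⊗_R B be an L-R-twisted tensor product of algebras. Define T₁ : (A ⊗ B) ⊗ (A ⊗ B) → (A ⊗ B) ⊗ (A ⊗ B) by T₁((a ⊗ b) ⊗ (a' ⊗ b')) = (a_Q ⊗ b_R) ⊗ (a'_R ⊗ b'_Q). Then T₁ is a twistor for the ordinary tensor product algebra A ⊗ B, and the twisted algebra (A ⊗ B)^{T₁} equals A _Q⊗_R B. -/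
open TensorProduct

noncomputable section

namespace LR


section AuxLemmas

set_option synthInstance.maxHeartbeats 1000000
set_option maxHeartbeats 2000000

variable {k : Type*} [Field k]
variable {A B : Type*} [Ring A] [Algebra k A] [Ring B] [Algebra k B]

/-- the permutation used for condition 5 -/
def phi5 : (B ⊗[k] (A ⊗[k] B)) ⊗[k] (A ⊗[k] (B ⊗[k] A)) →ₗ[k]
    (A ⊗[k] B) ⊗[k] ((A ⊗[k] B) ⊗[k] (A ⊗[k] B)) :=
  (TensorProduct.map LinearMap.id (TensorProduct.comm k (A ⊗[k] B) (A ⊗[k] B)).toLinearMap)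
  ∘ₗ (TensorProduct.assoc k (A ⊗[k] B) (A ⊗[k] B) (A ⊗[k] B)).toLinearMap
  ∘ₗ (TensorProduct.map (tensorTensorTensorComm k A A B B).toLinearMap LinearMap.id)
  ∘ₗ (TensorProduct.map (TensorProduct.map (TensorProduct.comm k A A).toLinearMap LinearMap.id) LinearMap.id)
  ∘ₗ (TensorProduct.map (TensorProduct.comm k (B ⊗[k] B) (A ⊗[k] A)).toLinearMap LinearMap.id)
  ∘ₗ (TensorProduct.map (tensorTensorTensorComm k B A B A).toLinearMap LinearMap.id)
  ∘ₗ (TensorProduct.assoc k (B ⊗[k] A) (B ⊗[k] A) (A ⊗[k] B)).symm.toLinearMap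
  ∘ₗ (TensorProduct.map LinearMap.id (TensorProduct.comm k (A ⊗[k] B) (B ⊗[k] A)).toLinearMap)
  ∘ₗ (TensorProduct.map LinearMap.id (tensorTensorTensorComm k A B B A).toLinearMap)
  ∘ₗ (tensorTensorTensorComm k B (A ⊗[k] B) A (B ⊗[k] A)).toLinearMap

variable (Q : A ⊗[k] B →ₗ[k] A ⊗[k] B) (R : B ⊗[k] A →ₗ[k] A ⊗[k] B)

lemma aux3expl (x y : A ⊗[k] B) (a'' : A) (b'' : B) :
    mu23 (tensMul (LinearMap.mul' k A) (LinearMap.mul' k B))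
      (T13 (swap24 ∘ₗ (TensorProduct.map Q R) ∘ₗ lrRearr)
        ((TensorProduct.assoc k _ _ _).toLinearMap ((swap24 (x ⊗ₜ y)) ⊗ₜ (a'' ⊗ₜ b'')))) =
    swap24 ((qrext (LinearMap.mul' k B) Q b'' x) ⊗ₜ (rext (LinearMap.mul' k A) R a'' y)) := by
  induction x using TensorProduct.induction_on with
  | zero => simp
  | add x₁ x₂ ih₁ ih₂ => simp only [add_tmul, tmul_add, map_add, ih₁, ih₂]
  | tmul u v =>
    induction y using TensorProduct.induction_on with
    | zero => simp
    | add y₁ y₂ ih₁ ih₂ => simp only [add_tmul, tmul_add, map_add, ih₁, ih₂]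
    | tmul u' v' =>
      simp only [swap24, T13, T12, mu23, tensMul, lrRearr, qrext, rext, LinearMap.coe_comp,
        Function.comp_apply, LinearEquiv.coe_coe, map_tmul, assoc_tmul, assoc_symm_tmul,
        comm_tmul, tensorTensorTensorComm_tmul, LinearMap.id_coe, id_eq, mk_apply,
        LinearMap.flip_apply, LinearMap.mul'_apply, LinearEquiv.coe_toLinearMap]
      generalize Q (u ⊗ₜ[k] b'') = p
      generalize R (v' ⊗ₜ[k] a'') = q
      induction p using TensorProduct.induction_on with
      | zero => simp
      | add p₁ p₂ ih₁ ih₂ => simp only [add_tmul, tmul_add, map_add, ih₁, ih₂]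
      | tmul p₁ p₂ =>
        induction q using TensorProduct.induction_on with
        | zero => simp
        | add q₁ q₂ ih₁ ih₂ => simp only [add_tmul, tmul_add, map_add, ih₁, ih₂]
        | tmul q₁ q₂ => simp

lemma aux4expl (x y : A ⊗[k] B) (a : A) (b : B) :
    mu12 (tensMul (LinearMap.mul' k A) (LinearMap.mul' k B))
      (T13 (swap24 ∘ₗ (TensorProduct.map Q R) ∘ₗ lrRearr)
        ((a ⊗ₜ b) ⊗ₜ swap24 (x ⊗ₜ y))) =
    swap24 ((qlext (LinearMap.mul' k A) Q a x) ⊗ₜ (lext (LinearMap.mul' k B) R b y)) := by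
  induction x using TensorProduct.induction_on with
  | zero => simp
  | add x₁ x₂ ih₁ ih₂ => simp only [add_tmul, tmul_add, map_add, ih₁, ih₂]
  | tmul u v =>
    induction y using TensorProduct.induction_on with
    | zero => simp
    | add y₁ y₂ ih₁ ih₂ => simp only [add_tmul, tmul_add, map_add, ih₁, ih₂]
    | tmul u' v' =>
      simp only [swap24, T13, T12, mu12, tensMul, lrRearr, qlext, lext, LinearMap.coe_comp,
        Function.comp_apply, LinearEquiv.coe_coe, map_tmul, assoc_tmul, assoc_symm_tmul,
        comm_tmul, tensorTensorTensorComm_tmul, LinearMap.id_coe, id_eq, mk_apply,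
        LinearMap.flip_apply, LinearMap.mul'_apply, LinearEquiv.coe_toLinearMap]
      generalize Q (a ⊗ₜ[k] v) = p
      generalize R (b ⊗ₜ[k] u') = q
      induction p using TensorProduct.induction_on with
      | zero => simp
      | add p₁ p₂ ih₁ ih₂ => simp only [add_tmul, tmul_add, map_add, ih₁, ih₂]
      | tmul p₁ p₂ =>
        induction q using TensorProduct.induction_on with
        | zero => simp
        | add q₁ q₂ ih₁ ih₂ => simp only [add_tmul, tmul_add, map_add, ih₁, ih₂]
        | tmul q₁ q₂ => simp

lemma aux5Lexpl (x y : A ⊗[k] B) (a : A) (b : B) :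
    T12 (swap24 ∘ₗ (TensorProduct.map Q R) ∘ₗ lrRearr) ((a ⊗ₜ b) ⊗ₜ swap24 (x ⊗ₜ y)) =
    phi5 ((swR R b x) ⊗ₜ (swQ2 Q a y)) := by
  induction x using TensorProduct.induction_on with
  | zero => simp
  | add x₁ x₂ ih₁ ih₂ => simp only [add_tmul, tmul_add, map_add, ih₁, ih₂]
  | tmul u v =>
    induction y using TensorProduct.induction_on with
    | zero => simp
    | add y₁ y₂ ih₁ ih₂ => simp only [add_tmul, tmul_add, map_add, ih₁, ih₂]
    | tmul u' v' =>
      simp only [swap24, T12, lrRearr, swR, swQ2, LinearMap.coe_comp,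
        Function.comp_apply, LinearEquiv.coe_coe, map_tmul, assoc_tmul, assoc_symm_tmul,
        comm_tmul, tensorTensorTensorComm_tmul, LinearMap.id_coe, id_eq, mk_apply,
        LinearMap.flip_apply, LinearMap.mul'_apply, LinearEquiv.coe_toLinearMap]
      generalize Q (a ⊗ₜ[k] v') = p
      generalize R (b ⊗ₜ[k] u) = q
      induction p using TensorProduct.induction_on with
      | zero => simp
      | add p₁ p₂ ih₁ ih₂ => simp only [add_tmul, tmul_add, map_add, ih₁, ih₂]
      | tmul p₁ p₂ =>
        induction q using TensorProduct.induction_on with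
        | zero => simp
        | add q₁ q₂ ih₁ ih₂ => simp only [add_tmul, tmul_add, map_add, ih₁, ih₂]
        | tmul q₁ q₂ => simp [phi5]

lemma aux5Rexpl (x y : A ⊗[k] B) (a'' : A) (b'' : B) :
    T23 (swap24 ∘ₗ (TensorProduct.map Q R) ∘ₗ lrRearr)
      ((TensorProduct.assoc k _ _ _).toLinearMap ((swap24 (x ⊗ₜ y)) ⊗ₜ (a'' ⊗ₜ b''))) =
    phi5 ((swQ Q b'' y) ⊗ₜ (swR2 R a'' x)) := by
  induction x using TensorProduct.induction_on with
  | zero => simp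
  | add x₁ x₂ ih₁ ih₂ => simp only [add_tmul, tmul_add, map_add, ih₁, ih₂]
  | tmul s t =>
    induction y using TensorProduct.induction_on with
    | zero => simp
    | add y₁ y₂ ih₁ ih₂ => simp only [add_tmul, tmul_add, map_add, ih₁, ih₂]
    | tmul s' t' =>
      simp only [swap24, T23, lrRearr, swQ, swR2, LinearMap.coe_comp,
        Function.comp_apply, LinearEquiv.coe_coe, map_tmul, assoc_tmul, assoc_symm_tmul,
        comm_tmul, tensorTensorTensorComm_tmul, LinearMap.id_coe, id_eq, mk_apply,
        LinearMap.flip_apply, LinearMap.mul'_apply, LinearEquiv.coe_toLinearMap]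
      generalize Q (s' ⊗ₜ[k] b'') = m
      generalize R (t ⊗ₜ[k] a'') = n
      induction m using TensorProduct.induction_on with
      | zero => simp
      | add m₁ m₂ ih₁ ih₂ => simp only [add_tmul, tmul_add, map_add, ih₁, ih₂]
      | tmul m₁ m₂ =>
        induction n using TensorProduct.induction_on with
        | zero => simp
        | add n₁ n₂ ih₁ ih₂ => simp only [add_tmul, tmul_add, map_add, ih₁, ih₂]
        | tmul n₁ n₂ => simp [phi5]

end AuxLemmas

set_option synthInstance.maxHeartbeats 1000000 in
set_option maxHeartbeats 2000000 in
/-- `T₁((a ⊗ b) ⊗ (a' ⊗ b')) = (a_Q ⊗ b_R) ⊗ (a'_R ⊗ b'_Q)` is a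
twistor for the ordinary tensor product algebra `A ⊗ B`, and `(A ⊗ B)^{T₁} = A _Q⊗_R B`. -/
theorem T1_twistor_of_tensor_product
    {k : Type*} [Field k] {A B : Type*}
    [Ring A] [Algebra k A] [Ring B] [Algebra k B]
    (Q : A ⊗[k] B →ₗ[k] A ⊗[k] B) (R : B ⊗[k] A →ₗ[k] A ⊗[k] B)
    (h : IsLRPair (LinearMap.mul' k A) (LinearMap.mul' k B) (1 : A) (1 : B) Q R) :
    IsTwistor (tensMul (LinearMap.mul' k A) (LinearMap.mul' k B))
      ((1 : A) ⊗ₜ[k] (1 : B)) (swap24 ∘ₗ (TensorProduct.map Q R) ∘ₗ lrRearr) ∧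
    tensMul (LinearMap.mul' k A) (LinearMap.mul' k B) ∘ₗ
        (swap24 ∘ₗ (TensorProduct.map Q R) ∘ₗ lrRearr) =
      lrMulGen (LinearMap.mul' k A) (LinearMap.mul' k B) Q R := by
  obtain ⟨⟨hR1, hR2, hRext, hLext⟩, hQ1, hQ2, hQl, hQr, hC1, hC2⟩ := h
  constructor
  · refine ⟨?_, ?_, ?_, ?_, ?_⟩
    · intro d
      induction d using TensorProduct.induction_on with
      | zero => simp
      | add d₁ d₂ ih₁ ih₂ => simp only [tmul_add, map_add, ih₁, ih₂]
      | tmul a b => simp [lrRearr, swap24, hQ2, hR1]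
    · intro d
      induction d using TensorProduct.induction_on with
      | zero => simp
      | add d₁ d₂ ih₁ ih₂ => simp only [add_tmul, map_add, ih₁, ih₂]
      | tmul a b => simp [lrRearr, swap24, hQ1, hR2]
    · ext a b a' b' a'' b''
      simp only [TensorProduct.AlgebraTensorModule.curry_apply, TensorProduct.curry_apply,
        LinearMap.coe_restrictScalars, LinearMap.coe_comp, Function.comp_apply]
      rw [show T12 (swap24 ∘ₗ (TensorProduct.map Q R) ∘ₗ lrRearr)
            ((a ⊗ₜ b) ⊗ₜ ((a' ⊗ₜ b') ⊗ₜ (a'' ⊗ₜ b''))) =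
          (TensorProduct.assoc k _ _ _).toLinearMap
            ((swap24 (Q (a ⊗ₜ b') ⊗ₜ R (b ⊗ₜ a'))) ⊗ₜ (a'' ⊗ₜ b'')) from by
        simp [T12, lrRearr, swap24]]
      rw [aux3expl Q R (Q (a ⊗ₜ b')) (R (b ⊗ₜ a')) a'' b'']
      rw [← hQr a b' b'', ← hRext a' a'' b]
      simp [mu23, tensMul, lrRearr, swap24]
    · ext a b a' b' a'' b''
      simp only [TensorProduct.AlgebraTensorModule.curry_apply, TensorProduct.curry_apply,
        LinearMap.coe_restrictScalars, LinearMap.coe_comp, Function.comp_apply]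
      rw [show T23 (swap24 ∘ₗ (TensorProduct.map Q R) ∘ₗ lrRearr)
            ((a ⊗ₜ b) ⊗ₜ ((a' ⊗ₜ b') ⊗ₜ (a'' ⊗ₜ b''))) =
          (a ⊗ₜ b) ⊗ₜ swap24 (Q (a' ⊗ₜ b'') ⊗ₜ R (b' ⊗ₜ a'')) from by
        simp [T23, lrRearr, swap24]]
      rw [aux4expl Q R (Q (a' ⊗ₜ b'')) (R (b' ⊗ₜ a'')) a b]
      rw [← hQl a a' b'', ← hLext a'' b b']
      simp [mu12, tensMul, lrRearr, swap24]
    · ext a b a' b' a'' b''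
      simp only [TensorProduct.AlgebraTensorModule.curry_apply, TensorProduct.curry_apply,
        LinearMap.coe_restrictScalars, LinearMap.coe_comp, Function.comp_apply]
      rw [show T23 (swap24 ∘ₗ (TensorProduct.map Q R) ∘ₗ lrRearr)
            ((a ⊗ₜ b) ⊗ₜ ((a' ⊗ₜ b') ⊗ₜ (a'' ⊗ₜ b''))) =
          (a ⊗ₜ b) ⊗ₜ swap24 (Q (a' ⊗ₜ b'') ⊗ₜ R (b' ⊗ₜ a'')) from by
        simp [T23, lrRearr, swap24]]
      rw [aux5Lexpl Q R (Q (a' ⊗ₜ b'')) (R (b' ⊗ₜ a'')) a b]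
      rw [← hC1 a' b b'', hC2 a'' a b']
      rw [← aux5Rexpl Q R (Q (a ⊗ₜ b')) (R (b ⊗ₜ a')) a'' b'']
      rw [show T12 (swap24 ∘ₗ (TensorProduct.map Q R) ∘ₗ lrRearr)
            ((a ⊗ₜ b) ⊗ₜ ((a' ⊗ₜ b') ⊗ₜ (a'' ⊗ₜ b''))) =
          (TensorProduct.assoc k _ _ _).toLinearMap
            ((swap24 (Q (a ⊗ₜ b') ⊗ₜ R (b ⊗ₜ a'))) ⊗ₜ (a'' ⊗ₜ b'')) from by
        simp [T12, lrRearr, swap24]]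
  · ext a b a' b'
    simp only [TensorProduct.AlgebraTensorModule.curry_apply, TensorProduct.curry_apply,
      LinearMap.coe_restrictScalars, LinearMap.coe_comp, Function.comp_apply]
    simp only [lrMulGen, tensMul, lrRearr, swap24, LinearMap.coe_comp, Function.comp_apply,
      LinearEquiv.coe_coe, map_tmul, comm_tmul, tensorTensorTensorComm_tmul,
      LinearMap.id_coe, id_eq]
    generalize Q (a ⊗ₜ[k] b') = p
    generalize R (b ⊗ₜ[k] a') = q
    induction p using TensorProduct.induction_on with
    | zero => simp
    | add p₁ p₂ ih₁ ih₂ => simp only [add_tmul, tmul_add, map_add, ih₁, ih₂]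
    | tmul p₁ p₂ =>
      induction q using TensorProduct.induction_on with
      | zero => simp
      | add q₁ q₂ ih₁ ih₂ => simp only [add_tmul, tmul_add, map_add, ih₁, ih₂]
      | tmul q₁ q₂ => simp

end LR
end
end

section
/- Let A _Q⊗_R B be an L-R-twisted tensor product of algebras. Define T₂ : (A ⊗ B) ⊗ (A ⊗ B) → (A ⊗ B) ⊗ (A ⊗ B) by T₂((a ⊗ b) ⊗ (a' ⊗ b')) = (a_Q ⊗ b) ⊗ (a' ⊗ b'_Q). Then T₂ is a twistor for the twisted tensor product algebra A ⊗_R B, and (A ⊗_R B)^{T₂} equals A _Q⊗_R B. -/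
open TensorProduct

noncomputable section

namespace LR


section Proof7

set_option maxHeartbeats 1000000
set_option synthInstance.maxHeartbeats 400000

variable {k : Type*} [Field k] {A B : Type*}
  [Ring A] [Algebra k A] [Ring B] [Algebra k B]

@[simp] lemma swL_tmul {X Y Z : Type*}
    [AddCommMonoid X] [Module k X] [AddCommMonoid Y] [Module k Y]
    [AddCommMonoid Z] [Module k Z] (x : X) (y : Y) (z : Z) :
    (swL : X ⊗[k] (Y ⊗[k] Z) →ₗ[k] _) (x ⊗ₜ (y ⊗ₜ z)) = y ⊗ₜ (x ⊗ₜ z) := by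
  simp [swL]

@[simp] lemma ex23_tmul {X Y Z : Type*}
    [AddCommMonoid X] [Module k X] [AddCommMonoid Y] [Module k Y]
    [AddCommMonoid Z] [Module k Z] (x : X) (y : Y) (z : Z) :
    (ex23 : (X ⊗[k] Y) ⊗[k] Z →ₗ[k] _) ((x ⊗ₜ y) ⊗ₜ z) = (x ⊗ₜ z) ⊗ₜ y := by
  simp [ex23]

@[simp] lemma swap24_tmul (a a' : A) (b b' : B) :
    (swap24 : (A ⊗[k] B) ⊗[k] (A ⊗[k] B) →ₗ[k] _) ((a ⊗ₜ b) ⊗ₜ (a' ⊗ₜ b'))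
      = (a ⊗ₜ b') ⊗ₜ (a' ⊗ₜ b) := by
  simp [swap24]

/-- final contraction of the `lrMulGen` multiplication. -/
def finMul : (A ⊗[k] B) ⊗[k] (A ⊗[k] B) →ₗ[k] A ⊗[k] B :=
  (TensorProduct.map (LinearMap.mul' k A)
      ((LinearMap.mul' k B) ∘ₗ (TensorProduct.comm k B B).toLinearMap))
    ∘ₗ (tensorTensorTensorComm k A B A B).toLinearMap

@[simp] lemma finMul_tmul (u p : A) (v s : B) :
    (finMul : (A ⊗[k] B) ⊗[k] (A ⊗[k] B) →ₗ[k] _) ((u ⊗ₜ v) ⊗ₜ (p ⊗ₜ s))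
      = (u * p) ⊗ₜ (s * v) := by
  simp [finMul]

lemma lrMulGen_apply (Q : A ⊗[k] B →ₗ[k] A ⊗[k] B) (R : B ⊗[k] A →ₗ[k] A ⊗[k] B)
    (a a' : A) (b b' : B) :
    lrMulGen (LinearMap.mul' k A) (LinearMap.mul' k B) Q R ((a ⊗ₜ b) ⊗ₜ (a' ⊗ₜ b'))
      = finMul (Q (a ⊗ₜ b') ⊗ₜ R (b ⊗ₜ a')) := by
  simp [lrMulGen, lrRearr, finMul]

lemma T_apply (Q : A ⊗[k] B →ₗ[k] A ⊗[k] B) (a a' : A) (b b' : B) :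
    (swap24 ∘ₗ (TensorProduct.map Q LinearMap.id) ∘ₗ swap24) ((a ⊗ₜ b) ⊗ₜ (a' ⊗ₜ b'))
      = swap24 (Q (a ⊗ₜ b') ⊗ₜ (a' ⊗ₜ b)) := by
  simp


/-- `(u₂ ⊗ v₂) ⊗ (p ⊗ s) ↦ (u₂ ⊗ b) ⊗ (a'p ⊗ s v₂)`. -/
def E3 (a' : A) (b : B) :
    (A ⊗[k] B) ⊗[k] (A ⊗[k] B) →ₗ[k] (A ⊗[k] B) ⊗[k] (A ⊗[k] B) :=
  (TensorProduct.map ((TensorProduct.mk k A B).flip b)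
      ((TensorProduct.map (LinearMap.mulLeft k a')
          ((LinearMap.mul' k B) ∘ₗ (TensorProduct.comm k B B).toLinearMap)) ∘ₗ swL))
    ∘ₗ (TensorProduct.assoc k A B (A ⊗[k] B)).toLinearMap

@[simp] lemma E3_tmul (a' : A) (b : B) (u₂ p : A) (v₂ s : B) :
    E3 a' b ((u₂ ⊗ₜ[k] v₂) ⊗ₜ (p ⊗ₜ s)) = (u₂ ⊗ₜ b) ⊗ₜ ((a' * p) ⊗ₜ (s * v₂)) := by
  simp [E3]

/-- `p ⊗ (s ⊗ u) ↦ Q(u ⊗ b'') ⊗ (p ⊗ s)`. -/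
def ins3 (Q : A ⊗[k] B →ₗ[k] A ⊗[k] B) (b'' : B) :
    A ⊗[k] (B ⊗[k] A) →ₗ[k] (A ⊗[k] B) ⊗[k] (A ⊗[k] B) :=
  (TensorProduct.map (Q ∘ₗ (TensorProduct.mk k A B).flip b'') LinearMap.id)
    ∘ₗ swL ∘ₗ (TensorProduct.map LinearMap.id (TensorProduct.comm k B A).toLinearMap)

@[simp] lemma ins3_tmul (Q : A ⊗[k] B →ₗ[k] A ⊗[k] B) (b'' : B) (p u : A) (s : B) :
    ins3 Q b'' (p ⊗ₜ (s ⊗ₜ u)) = Q (u ⊗ₜ b'') ⊗ₜ (p ⊗ₜ s) := by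
  simp [ins3]

/-- `(u ⊗ v) ⊗ (w ⊗ c) ↦ (uc ⊗ wb') ⊗ (a'' ⊗ v)`. -/
def E4 (b' : B) (a'' : A) :
    (A ⊗[k] B) ⊗[k] (B ⊗[k] A) →ₗ[k] (A ⊗[k] B) ⊗[k] (A ⊗[k] B) :=
  (TensorProduct.map
      ((TensorProduct.map (LinearMap.mul' k A) (LinearMap.mulRight k b'))
        ∘ₗ (TensorProduct.assoc k A A B).symm.toLinearMap
        ∘ₗ (TensorProduct.map LinearMap.id (TensorProduct.comm k B A).toLinearMap))
      ((TensorProduct.mk k A B) a''))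
    ∘ₗ ex23

@[simp] lemma E4_tmul (b' : B) (a'' : A) (u c : A) (v w : B) :
    E4 b' a'' ((u ⊗ₜ[k] v) ⊗ₜ (w ⊗ₜ c)) = ((u * c) ⊗ₜ (w * b')) ⊗ₜ (a'' ⊗ₜ v) := by
  simp [E4]

/-- `w ⊗ (c ⊗ d) ↦ Q(a ⊗ d) ⊗ (w ⊗ c)`. -/
def ins4 (Q : A ⊗[k] B →ₗ[k] A ⊗[k] B) (a : A) :
    B ⊗[k] (A ⊗[k] B) →ₗ[k] (A ⊗[k] B) ⊗[k] (B ⊗[k] A) :=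
  (TensorProduct.map (Q ∘ₗ (TensorProduct.mk k A B) a) LinearMap.id)
    ∘ₗ swL ∘ₗ (TensorProduct.map LinearMap.id (TensorProduct.comm k A B).toLinearMap)

@[simp] lemma ins4_tmul (Q : A ⊗[k] B →ₗ[k] A ⊗[k] B) (a c : A) (w d : B) :
    ins4 Q a (w ⊗ₜ (c ⊗ₜ d)) = Q (a ⊗ₜ d) ⊗ₜ (w ⊗ₜ c) := by
  simp [ins4]

/-- `(u₂ ⊗ v₂) ⊗ (u₁ ⊗ v₁) ↦ (u₂ ⊗ b) ⊗ ((u₁ ⊗ v₂) ⊗ (a'' ⊗ v₁))`. -/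
def P5 (b : B) (a'' : A) :
    (A ⊗[k] B) ⊗[k] (A ⊗[k] B) →ₗ[k] (A ⊗[k] B) ⊗[k] ((A ⊗[k] B) ⊗[k] (A ⊗[k] B)) :=
  (TensorProduct.map ((TensorProduct.mk k A B).flip b)
      ((TensorProduct.map LinearMap.id ((TensorProduct.mk k A B) a''))
        ∘ₗ (TensorProduct.assoc k A B B).symm.toLinearMap ∘ₗ swL))
    ∘ₗ (TensorProduct.assoc k A B (A ⊗[k] B)).toLinearMap

@[simp] lemma P5_tmul (b : B) (a'' u₂ u₁ : A) (v₂ v₁ : B) :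
    P5 b a'' ((u₂ ⊗ₜ[k] v₂) ⊗ₜ (u₁ ⊗ₜ v₁))
      = (u₂ ⊗ₜ b) ⊗ₜ ((u₁ ⊗ₜ v₂) ⊗ₜ (a'' ⊗ₜ v₁)) := by
  simp [P5]


lemma mul_eq (Q : A ⊗[k] B →ₗ[k] A ⊗[k] B) (R : B ⊗[k] A →ₗ[k] A ⊗[k] B) :
    lrMulGen (LinearMap.mul' k A) (LinearMap.mul' k B) LinearMap.id R ∘ₗ
        (swap24 ∘ₗ (TensorProduct.map Q LinearMap.id) ∘ₗ swap24) =
      lrMulGen (LinearMap.mul' k A) (LinearMap.mul' k B) Q R := by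
  ext a b a' b'
  simp only [AlgebraTensorModule.curry_apply, TensorProduct.curry_apply,
    LinearMap.coe_restrictScalars, LinearMap.coe_comp, Function.comp_apply]
  rw [show ∀ x : (A ⊗[k] B) ⊗[k] (A ⊗[k] B), swap24 (map Q LinearMap.id (swap24 x))
        = (swap24 ∘ₗ (TensorProduct.map Q LinearMap.id) ∘ₗ swap24) x from fun _ => rfl,
    T_apply, lrMulGen_apply]
  generalize Q (a ⊗ₜ[k] b') = q
  induction q using TensorProduct.induction_on with
  | zero => simp
  | tmul u v => rw [swap24_tmul, lrMulGen_apply]; simp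
  | add x y hx hy => simp only [add_tmul, map_add, hx, hy]


lemma unit_left (Q : A ⊗[k] B →ₗ[k] A ⊗[k] B)
    (hQ : ∀ b : B, Q ((1 : A) ⊗ₜ b) = (1 : A) ⊗ₜ b) (d : A ⊗[k] B) :
    (swap24 ∘ₗ (TensorProduct.map Q LinearMap.id) ∘ₗ swap24)
        (((1 : A) ⊗ₜ[k] (1 : B)) ⊗ₜ d) = ((1 : A) ⊗ₜ[k] (1 : B)) ⊗ₜ d := by
  induction d using TensorProduct.induction_on with
  | zero => simp
  | tmul a' b' => simp [hQ b']
  | add x y hx hy => simp only [tmul_add, map_add, hx, hy]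

lemma unit_right (Q : A ⊗[k] B →ₗ[k] A ⊗[k] B)
    (hQ : ∀ a : A, Q (a ⊗ₜ (1 : B)) = a ⊗ₜ (1 : B)) (d : A ⊗[k] B) :
    (swap24 ∘ₗ (TensorProduct.map Q LinearMap.id) ∘ₗ swap24)
        (d ⊗ₜ ((1 : A) ⊗ₜ[k] (1 : B))) = d ⊗ₜ ((1 : A) ⊗ₜ[k] (1 : B)) := by
  induction d using TensorProduct.induction_on with
  | zero => simp
  | tmul a b => simp [hQ a]
  | add x y hx hy => simp only [add_tmul, map_add, hx, hy]

lemma cond5 (Q : A ⊗[k] B →ₗ[k] A ⊗[k] B) :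
    T12 (swap24 ∘ₗ (TensorProduct.map Q LinearMap.id) ∘ₗ swap24) ∘ₗ
        T23 (swap24 ∘ₗ (TensorProduct.map Q LinearMap.id) ∘ₗ swap24)
      = T23 (swap24 ∘ₗ (TensorProduct.map Q LinearMap.id) ∘ₗ swap24) ∘ₗ
        T12 (swap24 ∘ₗ (TensorProduct.map Q LinearMap.id) ∘ₗ swap24) := by
  set T : (A ⊗[k] B) ⊗[k] (A ⊗[k] B) →ₗ[k] (A ⊗[k] B) ⊗[k] (A ⊗[k] B) :=
    swap24 ∘ₗ (TensorProduct.map Q LinearMap.id) ∘ₗ swap24 with hT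
  ext a b a' b' a'' b''
  simp only [AlgebraTensorModule.curry_apply, TensorProduct.curry_apply,
    LinearMap.coe_restrictScalars, LinearMap.coe_comp, Function.comp_apply]
  have h5a : (T12 T) ((T23 T) ((a ⊗ₜ[k] b) ⊗ₜ ((a' ⊗ₜ[k] b') ⊗ₜ (a'' ⊗ₜ[k] b''))))
      = P5 b a'' (Q (a ⊗ₜ b') ⊗ₜ Q (a' ⊗ₜ b'')) := by
    rw [T23]
    simp only [map_tmul, LinearMap.id_coe, id_eq, hT, LinearMap.coe_comp,
      Function.comp_apply, swap24_tmul]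
    generalize Q (a' ⊗ₜ[k] b'') = q1
    induction q1 using TensorProduct.induction_on with
    | zero => simp only [zero_tmul, tmul_zero, map_zero]
    | tmul u₁ v₁ =>
      simp only [map_tmul, LinearMap.id_coe, id_eq, swap24_tmul, T12,
        LinearMap.coe_comp, Function.comp_apply, LinearEquiv.coe_coe,
        assoc_symm_tmul]
      generalize Q (a ⊗ₜ[k] b') = q2
      induction q2 using TensorProduct.induction_on with
      | zero => simp
      | tmul u₂ v₂ => simp
      | add x y hx hy => simp only [add_tmul, map_add, tmul_add, hx, hy]
    | add x y hx hy =>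
      simp only [add_tmul, tmul_add, map_add, hx, hy]
  have h5b : (T23 T) ((T12 T) ((a ⊗ₜ[k] b) ⊗ₜ ((a' ⊗ₜ[k] b') ⊗ₜ (a'' ⊗ₜ[k] b''))))
      = P5 b a'' (Q (a ⊗ₜ b') ⊗ₜ Q (a' ⊗ₜ b'')) := by
    rw [T12]
    simp only [LinearMap.coe_comp, Function.comp_apply, LinearEquiv.coe_coe,
      assoc_symm_tmul, map_tmul, LinearMap.id_coe, id_eq, hT, swap24_tmul]
    generalize Q (a ⊗ₜ[k] b') = q2
    induction q2 using TensorProduct.induction_on with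
    | zero => simp only [zero_tmul, tmul_zero, map_zero]
    | tmul u₂ v₂ =>
      simp only [map_tmul, LinearMap.id_coe, id_eq, swap24_tmul, T23,
        LinearMap.coe_comp, Function.comp_apply, LinearEquiv.coe_coe, assoc_tmul]
      generalize Q (a' ⊗ₜ[k] b'') = q1
      induction q1 using TensorProduct.induction_on with
      | zero => simp
      | tmul u₁ v₁ => simp
      | add x y hx hy => simp only [add_tmul, map_add, tmul_add, hx, hy]
    | add x y hx hy =>
      simp only [add_tmul, tmul_add, map_add, hx, hy]
  rw [h5a, h5b]


lemma cond3 (Q : A ⊗[k] B →ₗ[k] A ⊗[k] B) (R : B ⊗[k] A →ₗ[k] A ⊗[k] B)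
    (h5 : ∀ (a : A) (b b' : B), Q (a ⊗ₜ (LinearMap.mul' k B) (b ⊗ₜ b'))
        = qrext (LinearMap.mul' k B) Q b' (Q (a ⊗ₜ b)))
    (h7 : ∀ (a a' : A) (b : B), swQ2 Q a' (R (b ⊗ₜ a)) = swR2 R a (Q (a' ⊗ₜ b))) :
    mu23 (lrMulGen (LinearMap.mul' k A) (LinearMap.mul' k B) LinearMap.id R) ∘ₗ
        T13 (swap24 ∘ₗ (TensorProduct.map Q LinearMap.id) ∘ₗ swap24) ∘ₗ
        T12 (swap24 ∘ₗ (TensorProduct.map Q LinearMap.id) ∘ₗ swap24)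
      = (swap24 ∘ₗ (TensorProduct.map Q LinearMap.id) ∘ₗ swap24) ∘ₗ
        mu23 (lrMulGen (LinearMap.mul' k A) (LinearMap.mul' k B) LinearMap.id R) := by
  set T : (A ⊗[k] B) ⊗[k] (A ⊗[k] B) →ₗ[k] (A ⊗[k] B) ⊗[k] (A ⊗[k] B) :=
    swap24 ∘ₗ (TensorProduct.map Q LinearMap.id) ∘ₗ swap24 with hT
  set m : (A ⊗[k] B) ⊗[k] (A ⊗[k] B) →ₗ[k] A ⊗[k] B :=
    lrMulGen (LinearMap.mul' k A) (LinearMap.mul' k B) LinearMap.id R with hm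
  ext a b a' b' a'' b''
  simp only [AlgebraTensorModule.curry_apply, TensorProduct.curry_apply,
    LinearMap.coe_restrictScalars, LinearMap.coe_comp, Function.comp_apply]
  have hA : mu23 m (T13 T (T12 T ((a ⊗ₜ[k] b) ⊗ₜ ((a' ⊗ₜ[k] b') ⊗ₜ (a'' ⊗ₜ[k] b'')))))
      = E3 a' b (ins3 Q b'' (swR2 R a'' (Q (a ⊗ₜ b')))) := by
    rw [T12]
    simp only [LinearMap.coe_comp, Function.comp_apply, LinearEquiv.coe_coe,
      assoc_symm_tmul, map_tmul, LinearMap.id_coe, id_eq, hT, swap24_tmul]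
    generalize Q (a ⊗ₜ[k] b') = q
    induction q using TensorProduct.induction_on with
    | zero => simp only [zero_tmul, tmul_zero, map_zero]
    | tmul u v =>
      simp only [map_tmul, LinearMap.id_coe, id_eq, swap24_tmul, assoc_tmul, T13, T12,
        LinearMap.coe_comp, Function.comp_apply, LinearEquiv.coe_coe,
        assoc_symm_tmul, comm_tmul, swR2, LinearMap.flip_apply, TensorProduct.mk_apply]
      have hL : mu23 m ((TensorProduct.map LinearMap.id (TensorProduct.comm k _ _).toLinearMap)
            ((TensorProduct.assoc k _ _ _)
              (swap24 (Q (u ⊗ₜ b'') ⊗ₜ (a'' ⊗ₜ[k] b)) ⊗ₜ (a' ⊗ₜ[k] v))))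
          = E3 a' b (Q (u ⊗ₜ b'') ⊗ₜ R (v ⊗ₜ a'')) := by
        generalize Q (u ⊗ₜ[k] b'') = q2
        induction q2 using TensorProduct.induction_on with
        | zero => simp only [zero_tmul, tmul_zero, map_zero]
        | tmul u₂ v₂ =>
          simp only [swap24_tmul, assoc_tmul, map_tmul, LinearMap.id_coe, id_eq,
            LinearEquiv.coe_coe, comm_tmul, mu23, hm, lrMulGen_apply]
          generalize R (v ⊗ₜ[k] a'') = r
          induction r using TensorProduct.induction_on with
          | zero => simp only [tmul_zero, map_zero]
          | tmul p s => simp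
          | add x y hx hy => simp only [map_add, tmul_add, hx, hy]
        | add x y hx hy => simp only [map_add, add_tmul, tmul_add, hx, hy]
      have hR : E3 a' b (ins3 Q b'' ((TensorProduct.assoc k _ _ _)
            ((TensorProduct.map (R ∘ₗ (TensorProduct.mk k B A).flip a'') LinearMap.id)
              ((TensorProduct.comm k A B) (u ⊗ₜ v)))))
          = E3 a' b (Q (u ⊗ₜ b'') ⊗ₜ R (v ⊗ₜ a'')) := by
        simp only [comm_tmul, map_tmul, LinearMap.coe_comp, Function.comp_apply,
          TensorProduct.mk_apply, LinearMap.flip_apply, LinearMap.id_coe, id_eq]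
        generalize R (v ⊗ₜ[k] a'') = r
        induction r using TensorProduct.induction_on with
        | zero => simp only [zero_tmul, tmul_zero, map_zero]
        | tmul p s => simp
        | add x y hx hy => simp only [map_add, add_tmul, tmul_add, hx, hy]
      rw [hL, ← hR]
      simp
    | add x y hx hy => simp only [map_add, add_tmul, tmul_add, hx, hy]
  have hB : T (mu23 m ((a ⊗ₜ[k] b) ⊗ₜ ((a' ⊗ₜ[k] b') ⊗ₜ (a'' ⊗ₜ[k] b''))))
      = E3 a' b (ins3 Q b'' (swQ2 Q a (R (b' ⊗ₜ a'')))) := by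
    rw [mu23]
    simp only [map_tmul, LinearMap.id_coe, id_eq, hm, lrMulGen_apply]
    generalize R (b' ⊗ₜ[k] a'') = r0
    induction r0 using TensorProduct.induction_on with
    | zero => simp only [tmul_zero, map_zero]
    | tmul p₀ s₀ =>
      simp only [finMul_tmul, LinearMap.id_coe, id_eq, hT, LinearMap.coe_comp,
        Function.comp_apply, swap24_tmul, map_tmul, swQ2, comm_tmul,
        TensorProduct.mk_apply]
      have e : Q (a ⊗ₜ[k] (s₀ * b'')) = qrext (LinearMap.mul' k B) Q b'' (Q (a ⊗ₜ s₀)) := by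
        simpa using h5 a s₀ b''
      rw [e]
      generalize Q (a ⊗ₜ[k] s₀) = q3
      induction q3 using TensorProduct.induction_on with
      | zero => simp only [map_zero, zero_tmul, tmul_zero]
      | tmul u₃ v₃ =>
        simp only [qrext, LinearMap.coe_comp, Function.comp_apply, map_tmul,
          LinearMap.flip_apply, TensorProduct.mk_apply, LinearMap.id_coe, id_eq,
          LinearEquiv.coe_coe, comm_tmul, ins3_tmul]
        generalize Q (u₃ ⊗ₜ[k] b'') = q4
        induction q4 using TensorProduct.induction_on with
        | zero => simp only [zero_tmul, map_zero, tmul_zero]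
        | tmul u₄ v₄ => simp
        | add x y hx hy => simp only [map_add, add_tmul, tmul_add, hx, hy]
      | add x y hx hy => simp only [map_add, add_tmul, tmul_add, hx, hy]
    | add x y hx hy => simp only [map_add, add_tmul, tmul_add, hx, hy]
  rw [hA, hB, h7 a'' a b']


lemma cond4 (Q : A ⊗[k] B →ₗ[k] A ⊗[k] B) (R : B ⊗[k] A →ₗ[k] A ⊗[k] B)
    (h4 : ∀ (a a' : A) (b : B), Q ((LinearMap.mul' k A) (a ⊗ₜ a') ⊗ₜ b)
        = qlext (LinearMap.mul' k A) Q a (Q (a' ⊗ₜ b)))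
    (h6 : ∀ (a : A) (b b' : B), swQ Q b' (R (b ⊗ₜ a)) = swR R b (Q (a ⊗ₜ b'))) :
    mu12 (lrMulGen (LinearMap.mul' k A) (LinearMap.mul' k B) LinearMap.id R) ∘ₗ
        T13 (swap24 ∘ₗ (TensorProduct.map Q LinearMap.id) ∘ₗ swap24) ∘ₗ
        T23 (swap24 ∘ₗ (TensorProduct.map Q LinearMap.id) ∘ₗ swap24)
      = (swap24 ∘ₗ (TensorProduct.map Q LinearMap.id) ∘ₗ swap24) ∘ₗ
        mu12 (lrMulGen (LinearMap.mul' k A) (LinearMap.mul' k B) LinearMap.id R) := by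
  set T : (A ⊗[k] B) ⊗[k] (A ⊗[k] B) →ₗ[k] (A ⊗[k] B) ⊗[k] (A ⊗[k] B) :=
    swap24 ∘ₗ (TensorProduct.map Q LinearMap.id) ∘ₗ swap24 with hT
  set m : (A ⊗[k] B) ⊗[k] (A ⊗[k] B) →ₗ[k] A ⊗[k] B :=
    lrMulGen (LinearMap.mul' k A) (LinearMap.mul' k B) LinearMap.id R with hm
  ext a b a' b' a'' b''
  simp only [AlgebraTensorModule.curry_apply, TensorProduct.curry_apply,
    LinearMap.coe_restrictScalars, LinearMap.coe_comp, Function.comp_apply]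
  have hA : mu12 m (T13 T (T23 T ((a ⊗ₜ[k] b) ⊗ₜ ((a' ⊗ₜ[k] b') ⊗ₜ (a'' ⊗ₜ[k] b'')))))
      = E4 b' a'' (ins4 Q a (swR R b (Q (a' ⊗ₜ b'')))) := by
    rw [T23]
    simp only [map_tmul, LinearMap.id_coe, id_eq, hT, LinearMap.coe_comp,
      Function.comp_apply, swap24_tmul, swR, TensorProduct.mk_apply]
    generalize Q (a' ⊗ₜ[k] b'') = q1
    induction q1 using TensorProduct.induction_on with
    | zero => simp only [zero_tmul, tmul_zero, map_zero]
    | tmul u₁ v₁ =>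
      simp only [map_tmul, LinearMap.id_coe, id_eq, swap24_tmul, T13, T12,
        LinearMap.coe_comp, Function.comp_apply, LinearEquiv.coe_coe,
        assoc_symm_tmul, comm_tmul, TensorProduct.mk_apply]
      have hL : mu12 m ((TensorProduct.map LinearMap.id (TensorProduct.comm k _ _).toLinearMap)
            ((TensorProduct.assoc k _ _ _)
              (swap24 (Q (a ⊗ₜ v₁) ⊗ₜ (a'' ⊗ₜ[k] b)) ⊗ₜ (u₁ ⊗ₜ[k] b'))))
          = E4 b' a'' (Q (a ⊗ₜ v₁) ⊗ₜ (TensorProduct.comm k A B) (R (b ⊗ₜ u₁))) := by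
        generalize Q (a ⊗ₜ[k] v₁) = q2
        induction q2 using TensorProduct.induction_on with
        | zero => simp only [zero_tmul, tmul_zero, map_zero]
        | tmul u v =>
          simp only [swap24_tmul, assoc_tmul, map_tmul, LinearMap.id_coe, id_eq,
            LinearEquiv.coe_coe, comm_tmul, mu12, LinearMap.coe_comp,
            Function.comp_apply, assoc_symm_tmul, hm, lrMulGen_apply]
          generalize R (b ⊗ₜ[k] u₁) = r
          induction r using TensorProduct.induction_on with
          | zero => simp only [tmul_zero, map_zero, zero_tmul]
          | tmul p s => simp
          | add x y hx hy => simp only [map_add, tmul_add, add_tmul, hx, hy]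
        | add x y hx hy => simp only [map_add, add_tmul, tmul_add, hx, hy]
      have hR : E4 b' a'' (ins4 Q a ((TensorProduct.assoc k B A B)
            ((TensorProduct.map (TensorProduct.comm k A B).toLinearMap LinearMap.id)
              (R (b ⊗ₜ u₁) ⊗ₜ v₁))))
          = E4 b' a'' (Q (a ⊗ₜ v₁) ⊗ₜ (TensorProduct.comm k A B) (R (b ⊗ₜ u₁))) := by
        generalize R (b ⊗ₜ[k] u₁) = r
        induction r using TensorProduct.induction_on with
        | zero => simp only [zero_tmul, tmul_zero, map_zero]
        | tmul p s => simp
        | add x y hx hy => simp only [map_add, add_tmul, tmul_add, hx, hy]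
      rw [hL, ← hR]
      simp
    | add x y hx hy => simp only [map_add, add_tmul, tmul_add, hx, hy]
  have hB : T (mu12 m ((a ⊗ₜ[k] b) ⊗ₜ ((a' ⊗ₜ[k] b') ⊗ₜ (a'' ⊗ₜ[k] b''))))
      = E4 b' a'' (ins4 Q a (swQ Q b'' (R (b ⊗ₜ a')))) := by
    rw [mu12]
    simp only [LinearMap.coe_comp, Function.comp_apply, LinearEquiv.coe_coe,
      assoc_symm_tmul, map_tmul, LinearMap.id_coe, id_eq, hm, lrMulGen_apply]
    generalize R (b ⊗ₜ[k] a') = r0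
    induction r0 using TensorProduct.induction_on with
    | zero => simp only [map_zero, zero_tmul, tmul_zero]
    | tmul p₀ s₀ =>
      simp only [finMul_tmul, LinearMap.id_coe, id_eq, hT, LinearMap.coe_comp,
        Function.comp_apply, swap24_tmul, map_tmul, swQ, comm_tmul,
        LinearEquiv.coe_coe, TensorProduct.mk_apply, LinearMap.flip_apply]
      have e : Q ((a * p₀) ⊗ₜ[k] b'') = qlext (LinearMap.mul' k A) Q a (Q (p₀ ⊗ₜ b'')) := by
        simpa using h4 a p₀ b''
      rw [e]
      generalize Q (p₀ ⊗ₜ[k] b'') = q3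
      induction q3 using TensorProduct.induction_on with
      | zero => simp only [map_zero, zero_tmul, tmul_zero]
      | tmul u₃ v₃ =>
        simp only [qlext, LinearMap.coe_comp, Function.comp_apply, map_tmul,
          TensorProduct.mk_apply, LinearMap.id_coe, id_eq, LinearEquiv.coe_coe,
          comm_tmul, ins4_tmul]
        generalize Q (a ⊗ₜ[k] v₃) = q4
        induction q4 using TensorProduct.induction_on with
        | zero => simp only [zero_tmul, map_zero, tmul_zero]
        | tmul u₄ v₄ => simp
        | add x y hx hy => simp only [map_add, add_tmul, tmul_add, hx, hy]
      | add x y hx hy => simp only [map_add, add_tmul, tmul_add, hx, hy]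
    | add x y hx hy => simp only [map_add, add_tmul, tmul_add, hx, hy]
  rw [hA, hB, h6 a' b b'']

end Proof7

/-- `T₂((a ⊗ b) ⊗ (a' ⊗ b')) = (a_Q ⊗ b) ⊗ (a' ⊗ b'_Q)` is a twistor for
the twisted tensor product algebra `A ⊗_R B`, and `(A ⊗_R B)^{T₂} = A _Q⊗_R B`. -/
theorem T2_twistor_of_twisted_tensor_product
    {k : Type*} [Field k] {A B : Type*}
    [Ring A] [Algebra k A] [Ring B] [Algebra k B]
    (Q : A ⊗[k] B →ₗ[k] A ⊗[k] B) (R : B ⊗[k] A →ₗ[k] A ⊗[k] B)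
    (h : IsLRPair (LinearMap.mul' k A) (LinearMap.mul' k B) (1 : A) (1 : B) Q R) :
    IsTwistor (lrMulGen (LinearMap.mul' k A) (LinearMap.mul' k B) LinearMap.id R)
      ((1 : A) ⊗ₜ[k] (1 : B)) (swap24 ∘ₗ (TensorProduct.map Q LinearMap.id) ∘ₗ swap24) ∧
    lrMulGen (LinearMap.mul' k A) (LinearMap.mul' k B) LinearMap.id R ∘ₗ
        (swap24 ∘ₗ (TensorProduct.map Q LinearMap.id) ∘ₗ swap24) =
      lrMulGen (LinearMap.mul' k A) (LinearMap.mul' k B) Q R := by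
  obtain ⟨⟨hR1, hR2, hR3, hR4⟩, hQ1, hQ2, hQl, hQr, h6, h7⟩ := h
  exact ⟨⟨fun d => unit_left Q hQ2 d, fun d => unit_right Q hQ1 d,
    cond3 Q R hQr h7, cond4 Q R hQl h6, cond5 Q⟩, mul_eq Q R⟩

end LR
end
end
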